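/- arXiv:1805.08336 — 11 statements merged into one kernel-verified Lean document; each statement's English description precedes it below -/
import Mathlib

section
/- Let S and A be finite nonempty sets, let μ : S → ℝ satisfy μ(s) ≥ 0 for all s, and let π : S → A → ℝ satisfy π(s)(a) ≥ 0 and ∑_{a} π(s)(a) = 1 for every s. Define ρ(s,a) = μ(s)·π(s)(a). Then (1/2)·∑_{s,a} ρ(s,a)·(1 − π(s)(a)) = W̄(ρ); that is, the causal Tsallis entropy of the policy computed against the occupancy μ equals the causal Tsallis entropy of the induced visitation measure ρ (Theorem 2 of the paper). -/
open Finset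

/-- Causal Tsallis entropy of a state-action visitation measure
(the ratio is `0` when the denominator is `0`, by Lean's division convention). -/
noncomputable def Wbar {S A : Type*} [Fintype S] [Fintype A] (ρ : S → A → ℝ) : ℝ :=
  (1 / 2) * ∑ s, ∑ a, ρ s a * (1 - ρ s a / ∑ a', ρ s a')

theorem stmt0 {S A : Type*} [Fintype S] [Fintype A] [Nonempty S] [Nonempty A]
    (μ : S → ℝ) (hμ : ∀ s, 0 ≤ μ s)
    (π : S → A → ℝ) (hπ0 : ∀ s a, 0 ≤ π s a) (hπ1 : ∀ s, ∑ a, π s a = 1) :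
    (1 / 2) * ∑ s, ∑ a, (μ s * π s a) * (1 - π s a)
      = Wbar (fun s a => μ s * π s a) := by
  unfold Wbar
  congr 1
  refine Finset.sum_congr rfl fun s _ => Finset.sum_congr rfl fun a _ => ?_
  have hden : ∑ a', μ s * π s a' = μ s := by
    rw [← Finset.mul_sum, hπ1, mul_one]
  rw [hden]
  rcases eq_or_ne (μ s) 0 with h | h
  · simp [h]
  · field_simp
end

section
/- Let S and A be finite nonempty sets. The function W̄(ρ) = (1/2)·∑_{s,a} ρ(s,a)·(1 − ρ(s,a)/(∑_{a'} ρ(s,a'))) (with the convention that the ratio is 0 when ∑_{a'} ρ(s,a') = 0) is concave on the convex set {ρ : S × A → ℝ | ρ(s,a) ≥ 0 for all (s,a)}: for all nonnegative ρ₁, ρ₂ and all λ₁, λ₂ ≥ 0 with λ₁ + λ₂ = 1, W̄(λ₁ρ₁ + λ₂ρ₂) ≥ λ₁·W̄(ρ₁) + λ₂·W̄(ρ₂). (Theorem 3 of the paper.) -/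
open Finset

/-!
`W̄` is positively homogeneous of degree one, so concavity reduces to superadditivity,
`W̄ ρ₁ + W̄ ρ₂ ≤ W̄ (ρ₁ + ρ₂)`. Writing `ρ (1 - ρ / N) = ρ - ρ² / N`, superadditivity follows
termwise from Sedrakyan's inequality `(x₁ + x₂)² / (y₁ + y₂) ≤ x₁² / y₁ + x₂² / y₂`.
-/

theorem add_sq_div_add_le {R : Type*} [Field R] [LinearOrder R] [IsStrictOrderedRing R]
    {x₁ x₂ y₁ y₂ : R} (hy₁ : 0 ≤ y₁) (hy₂ : 0 ≤ y₂)
    (hx₁ : y₁ = 0 → x₁ = 0) (hx₂ : y₂ = 0 → x₂ = 0) :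
    (x₁ + x₂) ^ 2 / (y₁ + y₂) ≤ x₁ ^ 2 / y₁ + x₂ ^ 2 / y₂ := by
  rcases hy₁.eq_or_lt with rfl | hy₁
  · simp [hx₁ rfl]
  rcases hy₂.eq_or_lt with rfl | hy₂
  · simp [hx₂ rfl]
  simpa [Fin.sum_univ_two] using
    sq_sum_div_le_sum_sq_div univ ![x₁, x₂] (g := ![y₁, y₂]) (by simp [Fin.forall_fin_two, *])

section Wbar

variable {S A : Type*} [Fintype S] [Fintype A]

theorem Wbar_const_mul (c : ℝ) (ρ : S → A → ℝ) :
    Wbar (fun s a => c * ρ s a) = c * Wbar ρ := by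
  rcases eq_or_ne c 0 with rfl | hc
  · simp [Wbar]
  simp only [Wbar, mul_div_mul_left _ _ hc, mul_assoc, ← mul_sum]
  ring

theorem Wbar_add_le {ρ₁ ρ₂ : S → A → ℝ} (h₁ : ∀ s a, 0 ≤ ρ₁ s a) (h₂ : ∀ s a, 0 ≤ ρ₂ s a) :
    Wbar ρ₁ + Wbar ρ₂ ≤ Wbar (fun s a => ρ₁ s a + ρ₂ s a) := by
  simp only [Wbar, ← mul_add, ← sum_add_distrib]
  gcongr with s _ a _
  have hle (ρ : S → A → ℝ) (h : ∀ s a, 0 ≤ ρ s a) : ρ s a ≤ ∑ a', ρ s a' :=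
    single_le_sum (fun a' _ => h s a') (mem_univ a)
  have hzero (ρ : S → A → ℝ) (h : ∀ s a, 0 ≤ ρ s a) : ∑ a', ρ s a' = 0 → ρ s a = 0 :=
    fun h0 => le_antisymm (h0 ▸ hle ρ h) (h s a)
  have key := add_sq_div_add_le (sum_nonneg fun a' _ => h₁ s a') (sum_nonneg fun a' _ => h₂ s a')
    (hzero ρ₁ h₁) (hzero ρ₂ h₂)
  have expand (x y : ℝ) : x * (1 - x / y) = x - x ^ 2 / y := by ring
  rw [expand, expand, expand, sum_add_distrib]
  linarith

end Wbar

theorem stmt2_general {S A : Type*} [Fintype S] [Fintype A]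
    (ρ₁ ρ₂ : S → A → ℝ) (h1 : ∀ s a, 0 ≤ ρ₁ s a) (h2 : ∀ s a, 0 ≤ ρ₂ s a)
    (lam1 lam2 : ℝ) (hl1 : 0 ≤ lam1) (hl2 : 0 ≤ lam2) :
    lam1 * Wbar ρ₁ + lam2 * Wbar ρ₂ ≤ Wbar (fun s a => lam1 * ρ₁ s a + lam2 * ρ₂ s a) := by
  rw [← Wbar_const_mul, ← Wbar_const_mul]
  exact Wbar_add_le (fun s a => mul_nonneg hl1 (h1 s a)) (fun s a => mul_nonneg hl2 (h2 s a))

/-- Theorem 3: `W̄` is concave on the set of nonnegative `ρ`. -/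
theorem stmt2 {S A : Type*} [Fintype S] [Fintype A] [Nonempty S] [Nonempty A]
    (ρ₁ ρ₂ : S → A → ℝ) (h1 : ∀ s a, 0 ≤ ρ₁ s a) (h2 : ∀ s a, 0 ≤ ρ₂ s a)
    (lam1 lam2 : ℝ) (hl1 : 0 ≤ lam1) (hl2 : 0 ≤ lam2) (hsum : lam1 + lam2 = 1) :
    lam1 * Wbar ρ₁ + lam2 * Wbar ρ₂ ≤ Wbar (fun s a => lam1 * ρ₁ s a + lam2 * ρ₂ s a) :=
  stmt2_general ρ₁ ρ₂ h1 h2 lam1 lam2 hl1 hl2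
end

section
/- Let A be a finite nonempty set and z : A → ℝ. Then there exists a unique real number τ such that ∑_{a} max(z(a) − τ, 0) = 1; moreover (max_a z(a)) − 1 ≤ τ < max_a z(a). Consequently a ↦ max(z(a) − τ, 0) is a probability vector: it is nonnegative and sums to one. -/
open Finset

section Aux

variable {A : Type*} [Fintype A] [Nonempty A] (z : A → ℝ)

private noncomputable def spmF (τ : ℝ) : ℝ := ∑ a, max (z a - τ) 0

private lemma spmF_cont : Continuous (spmF z) := by
  unfold spmF
  exact continuous_finset_sum _ fun a _ =>
    ((continuous_const.sub continuous_id).max continuous_const)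

private lemma spmF_anti : Antitone (spmF z) := by
  intro s t hst
  exact Finset.sum_le_sum fun a _ => max_le_max (by linarith) le_rfl

private lemma spmF_lt_max {τ : ℝ} (h : spmF z τ = 1) :
    τ < Finset.univ.sup' Finset.univ_nonempty z := by
  by_contra hc
  push_neg at hc
  have : spmF z τ = 0 := by
    unfold spmF
    apply Finset.sum_eq_zero
    intro a _
    have : z a ≤ τ := le_trans (Finset.le_sup' z (Finset.mem_univ a)) hc
    simp [max_eq_right]; linarith
  linarith

private lemma max_sub_le_spmF (τ : ℝ) :
    Finset.univ.sup' Finset.univ_nonempty z - τ ≤ spmF z τ := by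
  obtain ⟨a₀, -, ha₀⟩ := Finset.exists_mem_eq_sup' Finset.univ_nonempty z
  rw [ha₀]
  calc z a₀ - τ ≤ max (z a₀ - τ) 0 := le_max_left _ _
    _ ≤ spmF z τ := Finset.single_le_sum (f := fun a => max (z a - τ) 0)
        (fun a _ => le_max_right _ _) (Finset.mem_univ a₀)

private lemma spmF_uniq {τ₁ τ₂ : ℝ} (h₁ : spmF z τ₁ = 1) (h₂ : spmF z τ₂ = 1) :
    τ₁ = τ₂ := by
  obtain ⟨a₀, -, ha₀⟩ := Finset.exists_mem_eq_sup' Finset.univ_nonempty z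
  by_contra hne
  wlog hlt : τ₁ < τ₂ generalizing τ₁ τ₂
  · exact this h₂ h₁ (Ne.symm hne) (lt_of_le_of_ne (not_lt.mp hlt) (Ne.symm hne))
  have h2M := spmF_lt_max z h₂
  have : spmF z τ₂ < spmF z τ₁ := by
    unfold spmF
    apply Finset.sum_lt_sum (fun a _ => max_le_max (by linarith) le_rfl)
    refine ⟨a₀, Finset.mem_univ a₀, ?_⟩
    have hz : τ₂ < z a₀ := by rw [ha₀] at h2M; exact h2M
    rw [max_eq_left (by linarith), max_eq_left (by linarith)]
    linarith
  linarith

end Aux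

/-- Existence and uniqueness of the sparsemax threshold `τ` with
`∑ a, max (z a − τ) 0 = 1`, together with the bounds
`max_a z(a) − 1 ≤ τ < max_a z(a)`, and the fact that
`a ↦ max (z a − τ) 0` is a probability vector. -/
theorem stmt4 {A : Type*} [Fintype A] [Nonempty A] (z : A → ℝ) :
    (∃! τ : ℝ, ∑ a, max (z a - τ) 0 = 1) ∧
    ∀ τ : ℝ, (∑ a, max (z a - τ) 0 = 1) →
      (Finset.univ.sup' Finset.univ_nonempty z - 1 ≤ τ ∧
       τ < Finset.univ.sup' Finset.univ_nonempty z ∧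
       (∀ a, 0 ≤ max (z a - τ) 0) ∧
       ∑ a, max (z a - τ) 0 = 1) := by
  set M := Finset.univ.sup' Finset.univ_nonempty z with hM
  have hexists : ∃ τ : ℝ, spmF z τ = 1 := by
    have hFM : spmF z M = 0 := by
      unfold spmF
      apply Finset.sum_eq_zero
      intro a _
      have : z a ≤ M := Finset.le_sup' z (Finset.mem_univ a)
      simp [max_eq_right]; linarith
    have hFM1 : 1 ≤ spmF z (M - 1) := by
      have := max_sub_le_spmF z (M - 1)
      linarith
    have hsub := intermediate_value_Icc' (by linarith : M - 1 ≤ M)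
      ((spmF_cont z).continuousOn)
    have h1mem : (1 : ℝ) ∈ Set.Icc (spmF z M) (spmF z (M - 1)) := by
      rw [hFM]; exact ⟨by norm_num, hFM1⟩
    obtain ⟨τ, -, hτ⟩ := hsub h1mem
    exact ⟨τ, hτ⟩
  obtain ⟨τ₀, hτ₀⟩ := hexists
  constructor
  · exact ⟨τ₀, hτ₀, fun y hy => spmF_uniq z hy hτ₀⟩
  · intro τ hτ
    have h1 : spmF z τ = 1 := hτ
    refine ⟨by have := max_sub_le_spmF z τ; linarith, spmF_lt_max z h1,
      fun a => le_max_right _ _, hτ⟩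
end

section
/- Let n ≥ 1 and let z : Fin n → ℝ be sorted in nonincreasing order (z(i) ≥ z(j) whenever i ≤ j). Let K be the largest k ∈ {1, …, n} such that 1 + k·z(k) > ∑_{j=1}^{k} z(j), and set τ = (∑_{j=1}^{K} z(j) − 1)/K. Then ∑_{i=1}^{n} max(z(i) − τ, 0) = 1, and for every i, z(i) − τ > 0 if and only if i ≤ K. Hence the sparsemax threshold of z equals (∑_{j=1}^{K} z(j) − 1)/K and the supporting set of the sparsemax distribution is exactly {1, …, K}. -/
/-!
For `z` sorted nonincreasingly, write `S k = z 0 + ⋯ + z (k-1)` and `τ = (S K - 1) / K`.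
The condition at `K` says `τ < z (K-1)`, so every entry before position `K` exceeds `τ`;
the failure of the condition at `K + 1` says `1 + K z K ≤ S K`, i.e. `z K ≤ τ`, so no entry
from position `K` on exceeds `τ`. The positive parts of `z - τ` are therefore the first `K`
entries of `z - τ`, which sum to `S K - K τ = 1`.
-/

open Finset

theorem Finset.sum_max_zero_eq_sum_filter_pos {ι M : Type*} [AddCommMonoid M] [LinearOrder M]
    (s : Finset ι) (f : ι → M) :
    ∑ i ∈ s, max (f i) 0 = ∑ i ∈ s.filter (fun i => 0 < f i), f i := by
  rw [sum_filter]
  refine sum_congr rfl fun i _ => ?_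
  split_ifs with h
  · exact max_eq_left h.le
  · exact max_eq_right (not_lt.mp h)

namespace Sparsemax

variable {n : ℕ}

def prefixSum (z : Fin n → ℝ) (k : ℕ) : ℝ :=
  ∑ j ∈ univ.filter (fun j : Fin n => (j : ℕ) < k), z j

theorem prefixSum_succ (z : Fin n → ℝ) {k : ℕ} (hk : k < n) :
    prefixSum z (k + 1) = prefixSum z k + z ⟨k, hk⟩ := by
  have hsplit : univ.filter (fun j : Fin n => (j : ℕ) < k + 1) =
      insert ⟨k, hk⟩ (univ.filter fun j : Fin n => (j : ℕ) < k) := by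
    ext j
    simp only [mem_filter, mem_univ, true_and, mem_insert, Fin.ext_iff]
    omega
  rw [prefixSum, hsplit, sum_insert (by simp), add_comm]
  rfl

variable {z : Fin n → ℝ} {K : ℕ}

theorem threshold_lt_of_lt (hz : Antitone z) (hK : 0 < K) (hKn : K ≤ n)
    (hKcond : prefixSum z K < 1 + (K : ℝ) * z ⟨K - 1, by omega⟩) {i : Fin n} (hi : (i : ℕ) < K) :
    (prefixSum z K - 1) / K < z i := by
  have hKpos : (0 : ℝ) < K := by exact_mod_cast hK
  calc (prefixSum z K - 1) / K < z ⟨K - 1, by omega⟩ := by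
        rw [div_lt_iff₀ hKpos]
        linarith
    _ ≤ z i := hz (Fin.le_def.mpr (by simp only; omega))

theorem le_threshold_of_le (hz : Antitone z) (hK : 0 < K)
    (hnext : ∀ hKn : K < n, 1 + ((K + 1 : ℕ) : ℝ) * z ⟨K, hKn⟩ ≤ prefixSum z (K + 1))
    {i : Fin n} (hi : K ≤ (i : ℕ)) :
    z i ≤ (prefixSum z K - 1) / K := by
  have hKn : K < n := hi.trans_lt i.isLt
  have hKpos : (0 : ℝ) < K := by exact_mod_cast hK
  have hfail := hnext hKn
  rw [prefixSum_succ z hKn] at hfail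
  push_cast at hfail
  calc z i ≤ z ⟨K, hKn⟩ := hz (Fin.le_def.mpr hi)
    _ ≤ (prefixSum z K - 1) / K := by
        rw [le_div_iff₀ hKpos]
        linarith

theorem sub_threshold_pos_iff (hz : Antitone z) (hK : 0 < K) (hKn : K ≤ n)
    (hKcond : prefixSum z K < 1 + (K : ℝ) * z ⟨K - 1, by omega⟩)
    (hnext : ∀ hKn : K < n, 1 + ((K + 1 : ℕ) : ℝ) * z ⟨K, hKn⟩ ≤ prefixSum z (K + 1))
    (i : Fin n) :
    0 < z i - (prefixSum z K - 1) / K ↔ (i : ℕ) < K := by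
  rw [sub_pos]
  refine ⟨fun hlt => ?_, threshold_lt_of_lt hz hK hKn hKcond⟩
  by_contra hi
  exact (le_threshold_of_le hz hK hnext (not_lt.mp hi)).not_gt hlt

theorem sum_max_sub_threshold_eq_one (hK : 0 < K) (hKn : K ≤ n)
    (hsupp : ∀ i : Fin n, 0 < z i - (prefixSum z K - 1) / K ↔ (i : ℕ) < K) :
    ∑ i, max (z i - (prefixSum z K - 1) / K) 0 = 1 := by
  have hKpos : (K : ℝ) ≠ 0 := by positivity
  rw [sum_max_zero_eq_sum_filter_pos, filter_congr fun i _ => hsupp i, sum_sub_distrib,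
    sum_const, Fin.card_filter_val_lt, min_eq_right hKn, nsmul_eq_mul, ← prefixSum]
  field_simp
  ring

end Sparsemax

open Sparsemax in
/-- Closed form of the sparsemax threshold for a vector sorted in nonincreasing
order: with `K` the largest `k ∈ {1,…,n}` such that `1 + k·z(k) > ∑_{j=1}^k z(j)`
and `τ = (∑_{j=1}^K z(j) − 1)/K`, one has `∑_i max(z(i) − τ, 0) = 1` and the
supporting set of the sparsemax distribution is exactly the first `K` entries. -/
theorem stmt5 (n : ℕ) (z : Fin n → ℝ)
    (hsorted : ∀ i j : Fin n, i ≤ j → z j ≤ z i)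
    (K : ℕ) (hK1 : 1 ≤ K) (hKn : K ≤ n)
    (hKcond : 1 + (K : ℝ) * z ⟨K - 1, by omega⟩ >
      ∑ j ∈ Finset.univ.filter (fun j : Fin n => (j : ℕ) < K), z j)
    (hKmax : ∀ k : ℕ, (hk : K < k) → (hkn : k ≤ n) →
      ¬(1 + (k : ℝ) * z ⟨k - 1, by omega⟩ >
        ∑ j ∈ Finset.univ.filter (fun j : Fin n => (j : ℕ) < k), z j))
    (τ : ℝ)
    (hτ : τ = ((∑ j ∈ Finset.univ.filter (fun j : Fin n => (j : ℕ) < K), z j) - 1) / K) :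
    (∑ i, max (z i - τ) 0 = 1) ∧ ∀ i : Fin n, (0 < z i - τ ↔ (i : ℕ) < K) := by
  change τ = (prefixSum z K - 1) / K at hτ
  subst hτ
  have hnext : ∀ hKn : K < n, 1 + ((K + 1 : ℕ) : ℝ) * z ⟨K, hKn⟩ ≤ prefixSum z (K + 1) :=
    fun hKn => not_lt.mp (hKmax (K + 1) K.lt_succ_self hKn)
  have hsupp := sub_threshold_pos_iff hsorted hK1 hKn hKcond hnext
  exact ⟨sum_max_sub_threshold_eq_one hK1 hKn hsupp, hsupp⟩
end

section
/- Let A be a finite nonempty set, q : A → ℝ, and α > 0. The function π ↦ ∑_{a} π(a)·q(a) + α·(1/2)·(1 − ∑_{a} π(a)²) attains its maximum over the probability simplex Δ_A at the unique point π*(a) = max(q(a)/α − τ(q/α), 0), where τ denotes the sparsemax threshold: any maximizer equals π*, and π* is feasible and attains the maximum. (This is the core optimality statement of the maximum causal Tsallis entropy framework: the optimal policy is the sparsemax distribution of the scaled value vector.) -/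
open Finset

/-- Core optimality statement of the maximum causal Tsallis entropy framework:
over the probability simplex, `π ↦ ∑ a, π a * q a + α * (1/2) * (1 − ∑ a, (π a)²)`
attains its maximum at the unique point given by the sparsemax distribution of
`q/α`, where `τ` is the sparsemax threshold of `q/α`. -/
theorem stmt6 {A : Type*} [Fintype A] [Nonempty A] (q : A → ℝ) (α : ℝ) (hα : 0 < α)
    (τ : ℝ) (hτ : ∑ a, max (q a / α - τ) 0 = 1) :
    let f : (A → ℝ) → ℝ := fun p => (∑ a, p a * q a) + α * ((1 / 2) * (1 - ∑ a, (p a) ^ 2))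
    let Δ : Set (A → ℝ) := {p | (∀ a, 0 ≤ p a) ∧ ∑ a, p a = 1}
    let πstar : A → ℝ := fun a => max (q a / α - τ) 0
    πstar ∈ Δ ∧ (∀ p ∈ Δ, f p ≤ f πstar) ∧ (∀ p ∈ Δ, f p = f πstar → p = πstar) := by
  intro f Δ πstar
  set z : A → ℝ := fun a => q a / α with hz
  have hq : ∀ a, q a = α * z a := by
    intro a; simp only [hz]; field_simp
  have hπdef : ∀ a, πstar a = max (z a - τ) 0 := fun a => rfl
  have hπ0 : ∀ a, 0 ≤ πstar a := fun a => le_max_right _ _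
  have hπsum : ∑ a, πstar a = 1 := hτ
  -- key pointwise facts
  have hA : ∀ a, πstar a * (πstar a - z a) = -(τ * πstar a) := by
    intro a
    rcases le_total τ (z a) with h | h
    · rw [hπdef, max_eq_left (by linarith)]; ring
    · rw [hπdef, max_eq_right (by linarith)]; ring
  have hge : ∀ a, 0 ≤ πstar a - z a + τ := by
    intro a
    rcases le_total τ (z a) with h | h
    · rw [hπdef, max_eq_left (by linarith)]; linarith
    · rw [hπdef, max_eq_right (by linarith)]; linarith
  -- rewrite f in terms of z
  have hfp : ∀ p : A → ℝ, f p
      = α * (∑ a, p a * z a) + α * ((1 / 2) * (1 - ∑ a, p a ^ 2)) := by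
    intro p
    have : ∑ a, p a * q a = α * ∑ a, p a * z a := by
      rw [Finset.mul_sum]
      exact Finset.sum_congr rfl fun a _ => by rw [hq a]; ring
    simp only [f, this]
  -- main sum identity
  have main : ∀ p : A → ℝ, ∑ a, p a = 1 →
      ∑ a, ((1/2) * (p a - πstar a)^2 + p a * (πstar a - z a + τ))
        = (∑ a, πstar a * z a) - (∑ a, p a * z a)
          - (1/2) * (∑ a, (πstar a)^2) + (1/2) * (∑ a, p a ^ 2) := by
    intro p hps
    have hterm : ∀ a ∈ (univ : Finset A),
        (1/2) * (p a - πstar a)^2 + p a * (πstar a - z a + τ)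
          = (πstar a * z a - p a * z a - (1/2) * (πstar a)^2 + (1/2) * p a ^ 2)
            + (τ * p a - τ * πstar a) := by
      intro a _
      linear_combination hA a
    rw [Finset.sum_congr rfl hterm, Finset.sum_add_distrib]
    have h1 : ∑ a, (τ * p a - τ * πstar a) = 0 := by
      rw [Finset.sum_sub_distrib, ← Finset.mul_sum, ← Finset.mul_sum, hps, hπsum]
      ring
    rw [h1]
    simp only [add_zero, Finset.sum_add_distrib, Finset.sum_sub_distrib, ← Finset.mul_sum]
  -- difference formula
  have hdiff : ∀ p : A → ℝ, ∑ a, p a = 1 →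
      f πstar - f p = α * ∑ a, ((1/2) * (p a - πstar a)^2 + p a * (πstar a - z a + τ)) := by
    intro p hps
    rw [main p hps, hfp p, hfp πstar]
    ring
  have hnn : ∀ (p : A → ℝ), (∀ a, 0 ≤ p a) → ∀ a ∈ (univ : Finset A),
      0 ≤ (1/2) * (p a - πstar a)^2 + p a * (πstar a - z a + τ) := by
    intro p hp a _
    have := mul_nonneg (hp a) (hge a)
    nlinarith [sq_nonneg (p a - πstar a)]
  refine ⟨⟨hπ0, hπsum⟩, ?_, ?_⟩
  · intro p hp
    have h := hdiff p hp.2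
    have hs : 0 ≤ ∑ a, ((1/2) * (p a - πstar a)^2 + p a * (πstar a - z a + τ)) :=
      Finset.sum_nonneg (hnn p hp.1)
    have h2 : 0 ≤ f πstar - f p := h ▸ mul_nonneg hα.le hs
    exact sub_nonneg.mp h2
  · intro p hp heq
    have h := hdiff p hp.2
    rw [heq, sub_self] at h
    have hs : ∑ a, ((1/2) * (p a - πstar a)^2 + p a * (πstar a - z a + τ)) = 0 := by
      rcases mul_eq_zero.mp h.symm with h' | h'
      · exact absurd h' (ne_of_gt hα)
      · exact h'
    have hzero := (Finset.sum_eq_zero_iff_of_nonneg (hnn p hp.1)).mp hs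
    funext a
    have ha := hzero a (Finset.mem_univ a)
    have := mul_nonneg (hp.1 a) (hge a)
    nlinarith [sq_nonneg (p a - πstar a)]
end

section
/- Let A be a finite nonempty set, q : A → ℝ, α > 0, let τ = τ(q/α) be the sparsemax threshold of q/α, let π*(a) = max(q(a)/α − τ, 0), let Sup = {a : π*(a) > 0}, and let K = |Sup|. Then (1/2)·∑_{a} π*(a)² + τ = (1/2)·( ∑_{a ∈ Sup} (q(a)/α)² − K·τ² ). Equivalently, α·[ (1/2) + (1/2)·∑_a π*(a)² + τ ] = α·[ (1/2)·∑_{a ∈ Sup}((q(a)/α)² − τ²) + 1/2 ], which is the closed-form expression for the Lagrange multiplier c_s derived in the proof of Theorem 4. -/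
open Finset

/-- Closed-form expression for the Lagrange multiplier `c_s` in the proof of
Theorem 4: with `τ` the sparsemax threshold of `q/α`, `π* = sparsemax(q/α)`,
`Sup` its support and `K = |Sup|`,
`(1/2)·∑ π*(a)² + τ = (1/2)·(∑_{a ∈ Sup} (q(a)/α)² − K·τ²)`. -/
theorem stmt7 {A : Type*} [Fintype A] [Nonempty A] (q : A → ℝ) (α : ℝ) (hα : 0 < α)
    (τ : ℝ) (hτ : ∑ a, max (q a / α - τ) 0 = 1) :
    let πstar : A → ℝ := fun a => max (q a / α - τ) 0
    let Sup : Finset A := Finset.univ.filter (fun a => 0 < πstar a)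
    let K : ℕ := Sup.card
    ((1 / 2) * (∑ a, (πstar a) ^ 2) + τ
        = (1 / 2) * ((∑ a ∈ Sup, (q a / α) ^ 2) - (K : ℝ) * τ ^ 2)) ∧
    (α * (1 / 2 + (1 / 2) * (∑ a, (πstar a) ^ 2) + τ)
        = α * ((1 / 2) * (∑ a ∈ Sup, ((q a / α) ^ 2 - τ ^ 2)) + 1 / 2)) := by
  intro πstar Sup K
  have hmem : ∀ a ∈ Sup, πstar a = q a / α - τ := by
    intro a ha
    simp only [Sup, mem_filter] at ha
    have := ha.2
    simp only [πstar] at this ⊢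
    rcases le_or_gt (q a / α - τ) 0 with h | h
    · simp [max_eq_right h] at this
    · exact max_eq_left h.le
  have hzero : ∀ a ∈ (Finset.univ : Finset A), a ∉ Sup → πstar a = 0 := by
    intro a _ ha
    simp only [Sup, mem_filter, mem_univ, true_and, not_lt] at ha
    exact le_antisymm ha (le_max_right _ _)
  have hsum1 : ∑ a ∈ Sup, (q a / α - τ) = 1 := by
    rw [← hτ]
    rw [← Finset.sum_subset (Finset.subset_univ Sup) hzero]
    exact Finset.sum_congr rfl (fun a ha => (hmem a ha).symm)
  have hsq : ∑ a, (πstar a) ^ 2 = ∑ a ∈ Sup, (q a / α - τ) ^ 2 := by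
    rw [← Finset.sum_subset (Finset.subset_univ Sup)
      (fun a h1 h2 => by rw [hzero a h1 h2]; ring)]
    exact Finset.sum_congr rfl (fun a ha => by rw [hmem a ha])
  have hexp : ∑ a ∈ Sup, (q a / α - τ) ^ 2
      = (∑ a ∈ Sup, (q a / α) ^ 2) - 2 * τ * (∑ a ∈ Sup, (q a / α - τ)) - (K : ℝ) * τ ^ 2 := by
    have h : ∀ a ∈ Sup, (q a / α - τ) ^ 2
        = (q a / α) ^ 2 - 2 * τ * (q a / α - τ) - τ ^ 2 := fun a _ => by ring
    rw [Finset.sum_congr rfl h, Finset.sum_sub_distrib, Finset.sum_sub_distrib,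
      ← Finset.mul_sum, Finset.sum_const, nsmul_eq_mul]
  have key : (1 / 2) * (∑ a, (πstar a) ^ 2) + τ
      = (1 / 2) * ((∑ a ∈ Sup, (q a / α) ^ 2) - (K : ℝ) * τ ^ 2) := by
    rw [hsq, hexp, hsum1]; ring
  refine ⟨key, ?_⟩
  have h2 : ∑ a ∈ Sup, ((q a / α) ^ 2 - τ ^ 2)
      = (∑ a ∈ Sup, (q a / α) ^ 2) - (K : ℝ) * τ ^ 2 := by
    rw [Finset.sum_sub_distrib, Finset.sum_const, nsmul_eq_mul]
  rw [h2]
  nlinarith [key]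
end

section
/- Let S and A be finite nonempty sets, let d : S → ℝ be an initial distribution with d(s) > 0 for all s and ∑_s d(s) = 1, let T be a transition kernel (T(s'|s,a) ≥ 0, ∑_{s'} T(s'|s,a) = 1), let γ ∈ [0,1), let α > 0, let φ : S × A → ℝ^m be a feature map, and let ρ_E ∈ M. Then ρ ∈ M with ∑_{s,a} ρ(s,a)·φ(s,a) = ∑_{s,a} ρ_E(s,a)·φ(s,a) maximizes W̄ over the set {ρ' ∈ M : ∑_{s,a} ρ'(s,a)·φ(s,a) = ∑_{s,a} ρ_E(s,a)·φ(s,a)} if and only if there exist θ ∈ ℝ^m and c : S → ℝ such that, defining q(s,a) = ⟨θ, φ(s,a)⟩ + γ·∑_{s'} c(s')·T(s'|s,a) and π_ρ(a|s) = ρ(s,a)/∑_{a'} ρ(s,a'), one has for all s, a: (i) π_ρ(a|s) = max(q(s,a)/α − τ(q(s,·)/α), 0), and (ii) c(s) = α·[ (1/2)·∑_{a ∈ S(s)} ( (q(s,a)/α)² − τ(q(s,·)/α)² ) + 1/2 ], where S(s) = {a : π_ρ(a|s) > 0} and τ is the sparsemax threshold. (Theorem 4 of the paper.) -/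
/-!
For every state, the Tsallis term `∑ a, y a * (1 - y a / ∑ a', y a')` equals its linearisation
`∑ a, (1 - 2 * π a + ∑ a', π a' ^ 2) * y a` at an arbitrary policy `π`, minus the nonnegative
quadratic `∑ a, (y a - π a * ∑ a', y a') ^ 2 / ∑ a', y a'`, which vanishes when `y` is
proportional to `π`. Hence `W̄` is concave, and on a convex set of measures with positive state
marginals `ρ` maximises `W̄` iff it maximises the linear functional `⟨∇W̄(ρ), ·⟩`. The feasible
set is a standard-form polyhedron (nonnegativity plus the Bellman flow and feature equalities),
so by Farkas' lemma this holds iff there are multipliers `c`, `θ` for the equalities and `λ ≥ 0`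
complementary to `ρ`. Solved state by state, this stationarity condition is exactly the sparsemax
form `π = max (q / α - τ) 0`, and `∑ a, π a = 1` ties `τ` to `c`, giving the closed form of `c`.
-/

open Finset

open Filter Topology Matrix

lemma sum_mul_one_sub_div_sum_eq {A : Type*} [Fintype A] (π y : A → ℝ) (hy : ∑ a, y a ≠ 0) :
    ∑ a, y a * (1 - y a / ∑ a', y a') =
      ∑ a, (1 - 2 * π a + ∑ a', π a' ^ 2) * y a
        - ∑ a, (y a - π a * ∑ a', y a') ^ 2 / ∑ a', y a' := by
  set Y := ∑ a, y a
  set N := ∑ a, π a ^ 2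
  have hterm : ∀ a, (1 - 2 * π a + N) * y a - (y a - π a * Y) ^ 2 / Y
      = y a * (1 - y a / Y) + (N * y a - π a ^ 2 * Y) := fun a => by field_simp; ring
  rw [← sum_sub_distrib, sum_congr rfl fun a _ => hterm a, sum_add_distrib, sum_sub_distrib,
    ← mul_sum, ← sum_mul]
  ring

section Policy
variable {S A : Type*} [Fintype A]

noncomputable def policy (ρ : S → A → ℝ) (s : S) (a : A) : ℝ := ρ s a / ∑ a', ρ s a'

/-- Twice the partial derivative of `Wbar` at `ρ` in the direction of `(s, a)`. -/
noncomputable def tsallisGrad (ρ : S → A → ℝ) (s : S) (a : A) : ℝ :=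
  1 - 2 * policy ρ s a + ∑ a', policy ρ s a' ^ 2

lemma policy_mul_sum {ρ : S → A → ℝ} {s : S} (hs : ∑ a, ρ s a ≠ 0) (a : A) :
    policy ρ s a * ∑ a', ρ s a' = ρ s a :=
  div_mul_cancel₀ _ hs

lemma policy_nonneg {ρ : S → A → ℝ} {s : S} (hρ : ∀ a, 0 ≤ ρ s a) (a : A) :
    0 ≤ policy ρ s a :=
  div_nonneg (hρ a) (sum_nonneg fun a _ => hρ a)

lemma sum_policy {ρ : S → A → ℝ} {s : S} (hs : ∑ a, ρ s a ≠ 0) : ∑ a, policy ρ s a = 1 := by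
  simp only [policy, ← sum_div, div_self hs]

lemma policy_ne_zero_iff {ρ : S → A → ℝ} {s : S} (hs : ∑ a, ρ s a ≠ 0) {a : A} :
    policy ρ s a ≠ 0 ↔ ρ s a ≠ 0 := by
  simp [policy, hs]

end Policy

section Tsallis
variable {S A : Type*} [Fintype S] [Fintype A]

lemma Wbar_eq_sum_tsallisGrad_mul_sub (ρ ρ' : S → A → ℝ) (h : ∀ s, ∑ a, ρ' s a ≠ 0) :
    Wbar ρ' = (1 / 2) * ∑ s, ∑ a, tsallisGrad ρ s a * ρ' s a
      - (1 / 2) * ∑ s, ∑ a, (ρ' s a - policy ρ s a * ∑ a', ρ' s a') ^ 2 / ∑ a', ρ' s a' := by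
  rw [Wbar, sum_congr rfl fun s _ => sum_mul_one_sub_div_sum_eq (policy ρ s) (ρ' s) (h s),
    sum_sub_distrib, mul_sub]
  rfl

lemma Wbar_eq_sum_tsallisGrad_mul {ρ : S → A → ℝ} (h : ∀ s, ∑ a, ρ s a ≠ 0) :
    Wbar ρ = (1 / 2) * ∑ s, ∑ a, tsallisGrad ρ s a * ρ s a := by
  simp [Wbar_eq_sum_tsallisGrad_mul_sub ρ ρ h, policy_mul_sum (h _)]

lemma Wbar_add_mul {ρ : S → A → ℝ} (hρ : ∀ s, ∑ a, ρ s a ≠ 0) (y : S → A → ℝ) (t : ℝ)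
    (ht : ∀ s, ∑ a, ρ s a + t * ∑ a, y s a ≠ 0) :
    Wbar (fun s a => ρ s a + t * y s a) = Wbar ρ + t / 2 * ∑ s, ∑ a, tsallisGrad ρ s a * y s a
      - t ^ 2 / 2 * ∑ s, ∑ a, (y s a - policy ρ s a * ∑ a', y s a') ^ 2
          / (∑ a', ρ s a' + t * ∑ a', y s a') := by
  have hsum : ∀ s, ∑ a, (ρ s a + t * y s a) = ∑ a, ρ s a + t * ∑ a, y s a := fun s => by
    rw [sum_add_distrib, mul_sum]
  have hgap : ∀ s a, (ρ s a + t * y s a - policy ρ s a * ∑ a', (ρ s a' + t * y s a')) ^ 2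
      / ∑ a', (ρ s a' + t * y s a')
      = t ^ 2 * ((y s a - policy ρ s a * ∑ a', y s a') ^ 2
          / (∑ a', ρ s a' + t * ∑ a', y s a')) := by
    intro s a
    rw [hsum, mul_add, policy_mul_sum (hρ s)]
    ring
  rw [Wbar_eq_sum_tsallisGrad_mul_sub ρ _ fun s => hsum s ▸ ht s, Wbar_eq_sum_tsallisGrad_mul hρ]
  simp only [hgap]
  simp only [mul_add, sum_add_distrib, ← mul_sum, mul_left_comm _ t]
  ring

theorem isMaxOn_Wbar_iff {F : Set (S → A → ℝ)} (hF : Convex ℝ F)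
    (hpos : ∀ ρ' ∈ F, ∀ s, 0 < ∑ a, ρ' s a) {ρ : S → A → ℝ} (hρ : ρ ∈ F) :
    IsMaxOn Wbar F ρ ↔ IsMaxOn (fun ρ' => ∑ s, ∑ a, tsallisGrad ρ s a * ρ' s a) F ρ := by
  have hρ0 : ∀ s, ∑ a, ρ s a ≠ 0 := fun s => (hpos ρ hρ s).ne'
  simp only [isMaxOn_iff]
  constructor
  · intro hmax ρ' hρ'
    set y : S → A → ℝ := fun s a => ρ' s a - ρ s a
    set L := ∑ s, ∑ a, tsallisGrad ρ s a * y s a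
    set Q : ℝ → ℝ := fun t => t * ∑ s, ∑ a, (y s a - policy ρ s a * ∑ a', y s a') ^ 2
      / (∑ a', ρ s a' + t * ∑ a', y s a')
    have hQ : Tendsto Q (𝓝[>] 0) (𝓝 0) := by
      have : ContinuousAt Q 0 := by fun_prop (disch := simpa using hρ0 _)
      simpa [Q] using this.tendsto.mono_left nhdsWithin_le_nhds
    have hLQ : ∀ t ∈ Set.Ioo (0 : ℝ) 1, L ≤ Q t := by
      rintro t ⟨ht0, ht1⟩
      have hmem : (fun s a => ρ s a + t * y s a) ∈ F := by
        convert hF.add_smul_sub_mem hρ hρ' ⟨ht0.le, ht1.le⟩ using 1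
        ext s a
        simp [y]
      have hden : ∀ s, ∑ a, ρ s a + t * ∑ a, y s a ≠ 0 := fun s => by
        simpa [sum_add_distrib, mul_sum] using (hpos _ hmem s).ne'
      have hle := hmax _ hmem
      rw [Wbar_add_mul hρ0 y t hden] at hle
      have : t * (L - Q t) ≤ 0 := by simp only [Q]; nlinarith
      linarith [nonpos_of_mul_nonpos_right this ht0]
    have hL : L ≤ 0 := ge_of_tendsto hQ (eventually_of_mem (Ioo_mem_nhdsGT one_pos) hLQ)
    simpa [L, y, mul_sub, sum_sub_distrib] using hL
  · intro hlin ρ' hρ'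
    have hgap : 0 ≤ ∑ s, ∑ a, (ρ' s a - policy ρ s a * ∑ a', ρ' s a') ^ 2 / ∑ a', ρ' s a' :=
      sum_nonneg fun s _ => sum_nonneg fun a _ => div_nonneg (sq_nonneg _) (hpos ρ' hρ' s).le
    rw [Wbar_eq_sum_tsallisGrad_mul_sub ρ ρ' fun s => (hpos ρ' hρ' s).ne',
      Wbar_eq_sum_tsallisGrad_mul hρ0]
    linarith [hlin ρ' hρ']

end Tsallis

theorem exists_nonneg_eq_sum_smul_of_dotProduct_nonpos {𝕜 n ι : Type*} [Field 𝕜] [LinearOrder 𝕜]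
    [IsStrictOrderedRing 𝕜] [Fintype n] [DecidableEq ι] (s : Finset ι) {u : ι → n → 𝕜}
    {g : n → 𝕜} (h : ∀ y, (∀ i ∈ s, u i ⬝ᵥ y ≤ 0) → g ⬝ᵥ y ≤ 0) :
    ∃ c : ι → 𝕜, (∀ i, 0 ≤ c i) ∧ g = ∑ i ∈ s, c i • u i := by
  induction s using Finset.induction_on generalizing u g with
  | empty =>
    refine ⟨0, fun _ => le_rfl, dotProduct_eq_zero g fun y => le_antisymm (h y (by simp)) ?_⟩
    simpa using h (-y) (by simp)
  | insert a s ha ih =>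
    suffices ∃ c : ι → 𝕜, (∀ i, 0 ≤ c i) ∧ ∃ k : 𝕜, 0 ≤ k ∧ g = ∑ i ∈ s, c i • u i + k • u a by
      obtain ⟨c, hc0, k, hk, rfl⟩ := this
      refine ⟨Function.update c a k, fun i => ?_, ?_⟩
      · rcases eq_or_ne i a with rfl | hi
        · simp [hk]
        · simpa [hi] using hc0 i
      · rw [sum_insert ha, Function.update_self, add_comm]
        congr 1
        exact sum_congr rfl fun i hi => by rw [Function.update_of_ne (ne_of_mem_of_not_mem hi ha)]
    by_cases hs : ∀ y, (∀ i ∈ s, u i ⬝ᵥ y ≤ 0) → g ⬝ᵥ y ≤ 0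
    · obtain ⟨c, hc0, rfl⟩ := ih hs
      exact ⟨c, hc0, 0, le_rfl, by simp⟩
    push Not at hs
    obtain ⟨y₀, hy₀, hgy₀⟩ := hs
    have hV : 0 < u a ⬝ᵥ y₀ := by
      by_contra! hV
      exact hgy₀.not_ge (h y₀ fun i hi => (mem_insert.1 hi).elim (· ▸ hV) (hy₀ i))
    -- Fourier–Motzkin: eliminate `u a` by projecting along `y₀`.
    set V := u a ⬝ᵥ y₀
    let P : (n → 𝕜) → (n → 𝕜) := fun w => w - (w ⬝ᵥ y₀ / V) • u a
    have hP : ∀ w y, P w ⬝ᵥ y = w ⬝ᵥ (y - (u a ⬝ᵥ y / V) • y₀) := fun w y => by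
      simp only [P, sub_dotProduct, dotProduct_sub, smul_dotProduct, dotProduct_smul,
        smul_eq_mul]
      ring
    obtain ⟨c, hc0, hc⟩ := ih (u := fun i => P (u i)) (g := P g) fun y hy => by
      rw [hP]
      refine h _ fun i hi => ?_
      rcases mem_insert.1 hi with rfl | hi
      · simp [dotProduct_sub, dotProduct_smul, V, div_mul_cancel₀ _ hV.ne']
      · rw [← hP]; exact hy i hi
    refine ⟨c, hc0, g ⬝ᵥ y₀ / V - ∑ i ∈ s, c i * (u i ⬝ᵥ y₀ / V), ?_, ?_⟩
    · have : ∑ i ∈ s, c i * (u i ⬝ᵥ y₀ / V) ≤ 0 :=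
        sum_nonpos fun i hi => mul_nonpos_of_nonneg_of_nonpos (hc0 i)
          (div_nonpos_of_nonpos_of_nonneg (hy₀ i hi) hV.le)
      linarith [div_pos hgy₀ hV]
    · calc g = P g + (g ⬝ᵥ y₀ / V) • u a := by simp [P]
        _ = _ := by
          rw [hc]
          simp only [P, smul_sub, sum_sub_distrib, smul_smul, ← sum_smul]
          module

lemma exists_pos_nonneg_add_smul {n : Type*} [Finite n] {x y : n → ℝ} (hx : 0 ≤ x)
    (hy : ∀ p, x p = 0 → 0 ≤ y p) : ∃ t : ℝ, 0 < t ∧ 0 ≤ x + t • y := by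
  have hev : ∀ p, ∀ᶠ t in 𝓝[>] (0 : ℝ), 0 ≤ x p + t * y p := by
    intro p
    rcases (show 0 ≤ x p from hx p).lt_or_eq with hp | hp
    · have : ContinuousAt (fun t : ℝ => x p + t * y p) 0 := by fun_prop
      have := (this.tendsto.mono_left (nhdsWithin_le_nhds (s := Set.Ioi 0))).eventually
        (lt_mem_nhds (by simpa))
      exact this.mono fun _ => le_of_lt
    · filter_upwards [self_mem_nhdsWithin] with t ht
      rw [← hp, zero_add]
      exact mul_nonneg (le_of_lt ht) (hy p hp.symm)
  obtain ⟨t, ht, ht0⟩ := ((eventually_all.2 hev).and self_mem_nhdsWithin).exists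
  exact ⟨t, ht0, fun p => by simpa using ht p⟩

def standardPolyhedron {n J : Type*} [Fintype n] (v : J → n → ℝ) (b : J → ℝ) : Set (n → ℝ) :=
  {x | 0 ≤ x ∧ ∀ j, v j ⬝ᵥ x = b j}

lemma convex_standardPolyhedron {n J : Type*} [Fintype n] (v : J → n → ℝ) (b : J → ℝ) :
    Convex ℝ (standardPolyhedron v b) := by
  rintro x ⟨hx0, hxv⟩ y ⟨hy0, hyv⟩ s t hs ht hst
  refine ⟨add_nonneg (smul_nonneg hs hx0) (smul_nonneg ht hy0), fun j => ?_⟩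
  simp [dotProduct_add, dotProduct_smul, hxv, hyv, ← add_mul, hst]

theorem isMaxOn_standardPolyhedron_iff {n J : Type*} [Fintype n] [Fintype J] {v : J → n → ℝ}
    {b : J → ℝ} {x : n → ℝ} (hx : x ∈ standardPolyhedron v b) (g : n → ℝ) :
    IsMaxOn (g ⬝ᵥ ·) (standardPolyhedron v b) x ↔
      ∃ (μ : J → ℝ) (l : n → ℝ), 0 ≤ l ∧ (∀ p, x p ≠ 0 → l p = 0) ∧ g = ∑ j, μ j • v j - l := by
  classical
  constructor
  · intro hmax
    have hdir : ∀ y, (∀ j, v j ⬝ᵥ y = 0) → (∀ p, x p = 0 → 0 ≤ y p) → g ⬝ᵥ y ≤ 0 := by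
      intro y hyv hy
      obtain ⟨t, ht, hxt⟩ := exists_pos_nonneg_add_smul hx.1 hy
      have := isMaxOn_iff.1 hmax (x + t • y)
        ⟨hxt, fun j => by simp [dotProduct_add, dotProduct_smul, hx.2 j, hyv j]⟩
      rw [dotProduct_add, dotProduct_smul, smul_eq_mul] at this
      exact nonpos_of_mul_nonpos_right (by linarith) ht
    -- each equality as two inequalities, and `-eₚ` for each active bound `x p = 0`
    let u : (J ⊕ J) ⊕ n → n → ℝ :=
      Sum.elim (Sum.elim v (-v)) fun p => Pi.single p (if x p = 0 then -1 else 0)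
    obtain ⟨c, hc0, hc⟩ := exists_nonneg_eq_sum_smul_of_dotProduct_nonpos univ (u := u) (g := g)
      fun y hy => hdir y
        (fun j => le_antisymm (hy (.inl (.inl j)) (mem_univ _))
          (by simpa [u] using hy (.inl (.inr j)) (mem_univ _)))
        (fun p hp => by simpa [u, hp] using hy (.inr p) (mem_univ _))
    refine ⟨fun j => c (.inl (.inl j)) - c (.inl (.inr j)),
      fun p => if x p = 0 then c (.inr p) else 0, fun p => ?_, fun p hp => by simp [hp], ?_⟩
    · dsimp only
      split_ifs
      exacts [hc0 _, le_rfl]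
    · rw [hc]
      ext p
      simp only [Finset.sum_apply, Pi.smul_apply, smul_eq_mul, Fintype.sum_sum_type, Sum.elim_inl,
        Sum.elim_inr, Pi.neg_apply, mul_neg, sum_neg_distrib, Pi.single_apply, mul_ite, mul_one,
        mul_zero, sum_ite_eq, mem_univ, ↓reduceIte, sub_smul, sum_sub_distrib, Pi.sub_apply, u]
      split_ifs <;> ring
  · rintro ⟨μ, l, hl0, hlx, rfl⟩
    have hlx0 : l ⬝ᵥ x = 0 := sum_eq_zero fun p _ => by
      by_cases hp : x p = 0
      · simp [hp]
      · simp [hlx p hp]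
    refine isMaxOn_iff.2 fun x' hx' => ?_
    have : 0 ≤ l ⬝ᵥ x' := sum_nonneg fun p _ => mul_nonneg (hl0 p) (hx'.1 p)
    simp only [sub_dotProduct, sum_dotProduct, smul_dotProduct, hx'.2, hx.2, hlx0]
    linarith

lemma isMaxOn_comp_preimage_iff {α β δ : Type*} [Preorder β] {f : α → β} {g : δ → α}
    (hg : Function.Surjective g) {s : Set α} {b : δ} :
    IsMaxOn (f ∘ g) (g ⁻¹' s) b ↔ IsMaxOn f s (g b) := by
  refine ⟨fun h => isMaxOn_iff.2 fun x hx => ?_, fun h => h.on_preimage g⟩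
  obtain ⟨y, rfl⟩ := hg x
  exact isMaxOn_iff.1 h y hx

lemma sum_filter_pos_sq_sub_sq {A : Type*} [Fintype A] {π w : A → ℝ} {τ : ℝ}
    (hπ0 : ∀ a, 0 ≤ π a) (hπ1 : ∑ a, π a = 1) (h : ∀ a, 0 < π a → w a = π a + τ) :
    ∑ a ∈ univ.filter (fun a => 0 < π a), (w a ^ 2 - τ ^ 2) = ∑ a, π a ^ 2 + 2 * τ := by
  calc ∑ a ∈ univ.filter (fun a => 0 < π a), (w a ^ 2 - τ ^ 2)
      = ∑ a, (π a ^ 2 + 2 * τ * π a) := by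
        rw [sum_filter]
        refine sum_congr rfl fun a _ => ?_
        split_ifs with ha
        · rw [h a ha]; ring
        · simp [le_antisymm (not_lt.1 ha) (hπ0 a)]
    _ = ∑ a, π a ^ 2 + 2 * τ := by rw [sum_add_distrib, ← mul_sum, hπ1, mul_one]

theorem exists_sparsemax_threshold_iff {A : Type*} [Fintype A] {π w : A → ℝ} (hπ0 : ∀ a, 0 ≤ π a)
    (hπ1 : ∑ a, π a = 1) (κ : ℝ) :
    (∃ τ : ℝ, (∑ a, max (w a - τ) 0 = 1) ∧ (∀ a, π a = max (w a - τ) 0) ∧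
        κ = 1 / 2 * ∑ a ∈ univ.filter (fun a => 0 < π a), (w a ^ 2 - τ ^ 2) + 1 / 2) ↔
      ∃ l : A → ℝ, (∀ a, 0 ≤ l a) ∧ (∀ a, π a ≠ 0 → l a = 0) ∧
        ∀ a, 1 - 2 * π a + ∑ a', π a' ^ 2 = 2 * κ - 2 * w a - l a := by
  constructor
  · rintro ⟨τ, -, hπ, hκ⟩
    have hsupp : ∀ a, 0 < π a → w a = π a + τ := fun a ha => by
      rw [hπ a] at ha ⊢
      rw [max_eq_left (le_of_lt (by simpa using ha))]
      ring
    rw [sum_filter_pos_sq_sub_sq hπ0 hπ1 hsupp] at hκ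
    refine ⟨fun a => 2 * (π a - (w a - τ)), fun a => ?_, fun a ha => ?_, fun a => by linarith⟩
    · linarith [hπ a ▸ le_max_left (w a - τ) 0]
    · simp only [hsupp a ((hπ0 a).lt_of_ne' ha), sub_self, add_sub_cancel_right, mul_zero]
  · rintro ⟨l, hl0, hlπ, hstat⟩
    set τ := κ - (1 + ∑ a, π a ^ 2) / 2 with hτ
    have hsupp : ∀ a, π a ≠ 0 → w a = π a + τ := fun a ha => by
      linarith [hstat a, hlπ a ha, hτ]
    have hπ : ∀ a, π a = max (w a - τ) 0 := fun a => by
      by_cases ha : π a = 0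
      · rw [ha, eq_comm, max_eq_right]
        linarith [hstat a, hl0 a, hτ]
      · rw [max_eq_left] <;> linarith [hsupp a ha, hπ0 a]
    refine ⟨τ, by simp_rw [← hπ]; exact hπ1, hπ, ?_⟩
    rw [sum_filter_pos_sq_sub_sq hπ0 hπ1 fun a ha => hsupp a ha.ne']
    ring

section BellmanFlow
variable {S A ι : Type*} [Fintype S]

def flowPolytope [Fintype A] (d : S → ℝ) (γ : ℝ) (T : S → S → A → ℝ) : Set (S → A → ℝ) :=
  {ρ | (∀ s a, 0 ≤ ρ s a) ∧ ∀ s, ∑ a, ρ s a = d s + γ * ∑ s', ∑ a', T s s' a' * ρ s' a'}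

def featureMatching [Fintype A] (φ : S → A → ι → ℝ) (f : ι → ℝ) : Set (S → A → ℝ) :=
  {ρ | ∀ i, ∑ s, ∑ a, ρ s a * φ s a i = f i}

def flowFeatureRow [DecidableEq S] (γ : ℝ) (T : S → S → A → ℝ) (φ : S → A → ι → ℝ) :
    S ⊕ ι → S × A → ℝ
  | .inl s => Function.uncurry fun s' a' => (if s' = s then 1 else 0) - γ * T s s' a'
  | .inr i => Function.uncurry fun s' a' => φ s' a' i

def qValue [Fintype ι] (γ : ℝ) (T : S → S → A → ℝ) (φ : S → A → ι → ℝ) (θ : ι → ℝ) (c : S → ℝ)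
    (s : S) (a : A) : ℝ :=
  (∑ i, θ i * φ s a i) + γ * ∑ s', c s' * T s' s a

variable {d : S → ℝ} {γ : ℝ} {T : S → S → A → ℝ} {φ : S → A → ι → ℝ} {f : ι → ℝ}

lemma sum_pos_of_mem_flowPolytope [Fintype A] (hd : ∀ s, 0 < d s) (hγ : 0 ≤ γ)
    (hT : ∀ s' s a, 0 ≤ T s' s a) {ρ : S → A → ℝ} (hρ : ρ ∈ flowPolytope d γ T) (s : S) :
    0 < ∑ a, ρ s a := by
  rw [hρ.2 s]
  exact add_pos_of_pos_of_nonneg (hd s) (mul_nonneg hγ (sum_nonneg fun s' _ =>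
    sum_nonneg fun a' _ => mul_nonneg (hT s s' a') (hρ.1 s' a')))

lemma flowFeatureRow_inl_dotProduct [Fintype A] [DecidableEq S] (ρ : S → A → ℝ) (s : S) :
    flowFeatureRow γ T φ (.inl s) ⬝ᵥ Function.uncurry ρ
      = ∑ a, ρ s a - γ * ∑ s', ∑ a', T s s' a' * ρ s' a' := by
  simp [flowFeatureRow, dotProduct, Fintype.sum_prod_type, sub_mul, sum_sub_distrib, mul_sum,
    mul_assoc, ite_mul]

lemma flowFeatureRow_inr_dotProduct [Fintype A] [DecidableEq S] (ρ : S → A → ℝ) (i : ι) :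
    flowFeatureRow γ T φ (.inr i) ⬝ᵥ Function.uncurry ρ = ∑ s, ∑ a, ρ s a * φ s a i := by
  simp [flowFeatureRow, dotProduct, Fintype.sum_prod_type, mul_comm]

lemma preimage_uncurry_standardPolyhedron [Fintype A] [DecidableEq S] :
    Function.uncurry ⁻¹' standardPolyhedron (flowFeatureRow γ T φ) (Sum.elim d f)
      = flowPolytope d γ T ∩ featureMatching φ f := by
  ext ρ
  simp only [Set.mem_preimage, standardPolyhedron, flowPolytope, featureMatching, Set.mem_inter_iff,
    Set.mem_ofPred_eq, Sum.forall, Sum.elim_inl, Sum.elim_inr, flowFeatureRow_inl_dotProduct,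
    flowFeatureRow_inr_dotProduct, sub_eq_iff_eq_add, Pi.le_def, Prod.forall,
    Function.uncurry_apply_pair, Pi.zero_apply, and_assoc]

lemma convex_flowPolytope_inter_featureMatching [Fintype A] :
    Convex ℝ (flowPolytope d γ T ∩ featureMatching φ f) := by
  classical
  rw [← preimage_uncurry_standardPolyhedron]
  exact (convex_standardPolyhedron _ _).is_linear_preimage ⟨fun _ _ => rfl, fun _ _ => rfl⟩

lemma sum_smul_flowFeatureRow_apply [DecidableEq S] [Fintype ι] (μ : S ⊕ ι → ℝ) (s : S) (a : A) :
    (∑ j, μ j • flowFeatureRow γ T φ j) (s, a)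
      = μ (.inl s) - qValue γ T φ (fun i => -μ (.inr i)) (fun s => μ (.inl s)) s a := by
  simp only [flowFeatureRow, Finset.sum_apply, Pi.smul_apply, smul_eq_mul, Fintype.sum_sum_type,
    Function.uncurry_apply_pair, mul_sub, mul_ite, mul_one, mul_zero, mul_left_comm _ γ,
    sum_sub_distrib, sum_ite_eq, mem_univ, ↓reduceIte, qValue, neg_mul, sum_neg_distrib, mul_sum]
  ring

lemma qValue_smul [Fintype ι] (k : ℝ) (θ : ι → ℝ) (c : S → ℝ) (s : S) (a : A) :
    qValue γ T φ (k • θ) (k • c) s a = k * qValue γ T φ θ c s a := by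
  simp only [qValue, Pi.smul_apply, smul_eq_mul, mul_add, mul_sum, mul_assoc, mul_left_comm k]

theorem isMaxOn_flowPolytope_inter_featureMatching_iff [Fintype A] [Fintype ι] {ρ : S → A → ℝ}
    (hρ : ρ ∈ flowPolytope d γ T ∩ featureMatching φ f) (g : S → A → ℝ) :
    IsMaxOn (fun ρ' => ∑ s, ∑ a, g s a * ρ' s a) (flowPolytope d γ T ∩ featureMatching φ f) ρ ↔
      ∃ (μ : S → ℝ) (θ : ι → ℝ) (l : S → A → ℝ), (∀ s a, 0 ≤ l s a) ∧
        (∀ s a, ρ s a ≠ 0 → l s a = 0) ∧ ∀ s a, g s a = μ s - qValue γ T φ θ μ s a - l s a := by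
  classical
  have hobj : (fun ρ' => ∑ s, ∑ a, g s a * ρ' s a)
      = (Function.uncurry g ⬝ᵥ ·) ∘ Function.uncurry := by
    ext ρ'
    simp [dotProduct, Fintype.sum_prod_type]
  rw [← preimage_uncurry_standardPolyhedron] at hρ ⊢
  rw [hobj, isMaxOn_comp_preimage_iff fun x => ⟨Function.curry x, Function.uncurry_curry x⟩,
    isMaxOn_standardPolyhedron_iff hρ]
  constructor
  · rintro ⟨μ, l, hl0, hlρ, hg⟩
    refine ⟨fun s => μ (.inl s), fun i => -μ (.inr i), Function.curry l, fun s a => hl0 (s, a),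
      fun s a => hlρ (s, a), fun s a => ?_⟩
    have := congrFun hg (s, a)
    rw [Pi.sub_apply, sum_smul_flowFeatureRow_apply] at this
    exact this
  · rintro ⟨μ, θ, l, hl0, hlρ, hg⟩
    refine ⟨Sum.elim μ (-θ), Function.uncurry l, fun p => hl0 p.1 p.2, fun p => hlρ p.1 p.2,
      funext fun ⟨s, a⟩ => ?_⟩
    rw [Pi.sub_apply, sum_smul_flowFeatureRow_apply]
    simp [hg]

theorem exists_multipliers_iff_sparsemax [Fintype A] [Fintype ι] {α : ℝ} (hα : α ≠ 0)
    {ρ : S → A → ℝ} (hρ0 : ∀ s a, 0 ≤ ρ s a) (hρ : ∀ s, ∑ a, ρ s a ≠ 0) :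
    (∃ (μ : S → ℝ) (θ : ι → ℝ) (l : S → A → ℝ), (∀ s a, 0 ≤ l s a) ∧
        (∀ s a, ρ s a ≠ 0 → l s a = 0) ∧
        ∀ s a, tsallisGrad ρ s a = μ s - qValue γ T φ θ μ s a - l s a) ↔
      ∃ (θ : ι → ℝ) (c : S → ℝ), ∀ s, ∃ τ : ℝ,
        (∑ a, max (qValue γ T φ θ c s a / α - τ) 0 = 1) ∧
        (∀ a, policy ρ s a = max (qValue γ T φ θ c s a / α - τ) 0) ∧
        c s = α * (1 / 2 * ∑ a ∈ univ.filter (fun a => 0 < policy ρ s a),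
          ((qValue γ T φ θ c s a / α) ^ 2 - τ ^ 2) + 1 / 2) := by
  have hπ0 := fun s => policy_nonneg (hρ0 s)
  have hπ1 := fun s => sum_policy (hρ s)
  constructor
  · rintro ⟨μ, θ, l, hl0, hlρ, hg⟩
    refine ⟨(α / 2) • θ, (α / 2) • μ, fun s => ?_⟩
    obtain ⟨τ, h1, h2, h3⟩ := (exists_sparsemax_threshold_iff (hπ0 s) (hπ1 s) (μ s / 2)
      (w := fun a => qValue γ T φ ((α / 2) • θ) ((α / 2) • μ) s a / α)).2
      ⟨l s, hl0 s, fun a ha => hlρ s a ((policy_ne_zero_iff (hρ s)).1 ha), fun a => by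
        rw [qValue_smul, ← tsallisGrad, hg]
        field_simp⟩
    refine ⟨τ, h1, h2, ?_⟩
    rw [← h3, Pi.smul_apply, smul_eq_mul]
    ring
  · rintro ⟨θ, c, h⟩
    have hstat : ∀ s, ∃ l : A → ℝ, (∀ a, 0 ≤ l a) ∧ (∀ a, policy ρ s a ≠ 0 → l a = 0) ∧
        ∀ a, tsallisGrad ρ s a = 2 * (c s / α) - 2 * (qValue γ T φ θ c s a / α) - l a := by
      intro s
      obtain ⟨τ, h1, h2, h3⟩ := h s
      exact (exists_sparsemax_threshold_iff (hπ0 s) (hπ1 s) (c s / α)).1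
        ⟨τ, h1, h2, by rw [h3]; field_simp⟩
    choose l hl0 hlρ hg using hstat
    refine ⟨(2 / α) • c, (2 / α) • θ, l, hl0,
      fun s a ha => hlρ s a ((policy_ne_zero_iff (hρ s)).2 ha), fun s a => ?_⟩
    rw [hg, qValue_smul, Pi.smul_apply, smul_eq_mul]
    ring

end BellmanFlow

theorem stmt8_general {S A : Type*} [Fintype S] [Fintype A]
    (m : ℕ)
    (d : S → ℝ) (hd : ∀ s, 0 < d s)
    (T : S → S → A → ℝ) (hT0 : ∀ s' s a, 0 ≤ T s' s a)
    (γ : ℝ) (hγ0 : 0 ≤ γ)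
    (α : ℝ) (hα : 0 < α)
    (φ : S → A → Fin m → ℝ)
    (M : Set (S → A → ℝ))
    (hM : M = {ρ' | (∀ s a, 0 ≤ ρ' s a) ∧
      ∀ s, ∑ a, ρ' s a = d s + γ * ∑ s', ∑ a', T s s' a' * ρ' s' a'})
    (ρE : S → A → ℝ)
    (ρ : S → A → ℝ) (hρ : ρ ∈ M)
    (hfeat : ∀ i, ∑ s, ∑ a, ρ s a * φ s a i = ∑ s, ∑ a, ρE s a * φ s a i) :
    (∀ ρ' ∈ M, (∀ i, ∑ s, ∑ a, ρ' s a * φ s a i = ∑ s, ∑ a, ρE s a * φ s a i) →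
        Wbar ρ' ≤ Wbar ρ)
    ↔
    (∃ (θ : Fin m → ℝ) (c : S → ℝ), ∀ s : S, ∃ τs : ℝ,
      (∑ a, max (((∑ i, θ i * φ s a i) + γ * ∑ s', c s' * T s' s a) / α - τs) 0 = 1) ∧
      (∀ a, ρ s a / (∑ a', ρ s a')
          = max (((∑ i, θ i * φ s a i) + γ * ∑ s', c s' * T s' s a) / α - τs) 0) ∧
      c s = α * ((1 / 2) * ∑ a ∈ Finset.univ.filter
              (fun a => 0 < ρ s a / (∑ a', ρ s a')),
            ((((∑ i, θ i * φ s a i) + γ * ∑ s', c s' * T s' s a) / α) ^ 2 - τs ^ 2)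
          + 1 / 2)) := by
  subst hM
  set F := flowPolytope d γ T ∩ featureMatching φ fun i => ∑ s, ∑ a, ρE s a * φ s a i
  have hρF : ρ ∈ F := ⟨hρ, hfeat⟩
  have hpos : ∀ ρ' ∈ F, ∀ s, 0 < ∑ a, ρ' s a :=
    fun ρ' hρ' => sum_pos_of_mem_flowPolytope hd hγ0 hT0 hρ'.1
  calc _ ↔ IsMaxOn Wbar F ρ :=
        ⟨fun h => isMaxOn_iff.2 fun ρ' hρ' => h ρ' hρ'.1 hρ'.2,
          fun h ρ' h₁ h₂ => isMaxOn_iff.1 h ρ' ⟨h₁, h₂⟩⟩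
    _ ↔ _ := isMaxOn_Wbar_iff convex_flowPolytope_inter_featureMatching hpos hρF
    _ ↔ _ := isMaxOn_flowPolytope_inter_featureMatching_iff hρF _
    _ ↔ _ := exists_multipliers_iff_sparsemax hα.ne' hρ.1 fun s => (hpos ρ hρF s).ne'

/-- Theorem 4: `ρ` in the Bellman flow polytope satisfying the feature-matching
constraint maximizes `W̄` over the feasible set iff there exist multipliers
`θ, c` such that the induced policy is the sparsemax distribution of
`q(s,·)/α` and `c` satisfies the sparse Bellman closed form. -/
theorem stmt8 {S A : Type*} [Fintype S] [Fintype A] [Nonempty S] [Nonempty A]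
    (m : ℕ)
    (d : S → ℝ) (hd : ∀ s, 0 < d s) (hdsum : ∑ s, d s = 1)
    (T : S → S → A → ℝ) (hT0 : ∀ s' s a, 0 ≤ T s' s a) (hT1 : ∀ s a, ∑ s', T s' s a = 1)
    (γ : ℝ) (hγ0 : 0 ≤ γ) (hγ1 : γ < 1)
    (α : ℝ) (hα : 0 < α)
    (φ : S → A → Fin m → ℝ)
    (M : Set (S → A → ℝ))
    (hM : M = {ρ' | (∀ s a, 0 ≤ ρ' s a) ∧
      ∀ s, ∑ a, ρ' s a = d s + γ * ∑ s', ∑ a', T s s' a' * ρ' s' a'})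
    (ρE : S → A → ℝ) (hρE : ρE ∈ M)
    (ρ : S → A → ℝ) (hρ : ρ ∈ M)
    (hfeat : ∀ i, ∑ s, ∑ a, ρ s a * φ s a i = ∑ s, ∑ a, ρE s a * φ s a i) :
    (∀ ρ' ∈ M, (∀ i, ∑ s, ∑ a, ρ' s a * φ s a i = ∑ s, ∑ a, ρE s a * φ s a i) →
        Wbar ρ' ≤ Wbar ρ)
    ↔
    (∃ (θ : Fin m → ℝ) (c : S → ℝ), ∀ s : S, ∃ τs : ℝ,
      (∑ a, max (((∑ i, θ i * φ s a i) + γ * ∑ s', c s' * T s' s a) / α - τs) 0 = 1) ∧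
      (∀ a, ρ s a / (∑ a', ρ s a')
          = max (((∑ i, θ i * φ s a i) + γ * ∑ s', c s' * T s' s a) / α - τs) 0) ∧
      c s = α * ((1 / 2) * ∑ a ∈ Finset.univ.filter
              (fun a => 0 < ρ s a / (∑ a', ρ s a')),
            ((((∑ i, θ i * φ s a i) + γ * ∑ s', c s' * T s' s a) / α) ^ 2 - τs ^ 2)
          + 1 / 2)) :=
  stmt8_general m d hd T hT0 γ hγ0 α hα φ M hM ρE ρ hρ hfeat
end

section
/- Let S and A be finite nonempty sets, let d : S → ℝ be an initial distribution (d(s) ≥ 0, ∑_s d(s) = 1), let T be a transition kernel (T(s'|s,a) ≥ 0, ∑_{s'} T(s'|s,a) = 1), let γ ∈ [0,1), and let π : S → A → ℝ be a policy (π(a|s) ≥ 0, ∑_a π(a|s) = 1 for all s). Then there exists a unique ρ : S × A → ℝ satisfying, for all (s,a), ρ(s,a) = π(a|s)·( d(s) + γ·∑_{s',a'} T(s|s',a')·ρ(s',a') ); moreover this ρ is nonnegative and belongs to the Bellman flow polytope M. (This is the visitation-measure existence/uniqueness underlying Theorem 1.) -/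
open Finset

/-- Core L1 estimate: any function dominated by the homogeneous operator is zero. -/
lemma stmt9_core {S A : Type*} [Fintype S] [Fintype A]
    (T : S → S → A → ℝ) (hT0 : ∀ s' s a, 0 ≤ T s' s a) (hT1 : ∀ s a, ∑ s', T s' s a = 1)
    (γ : ℝ) (hγ0 : 0 ≤ γ) (hγ1 : γ < 1)
    (π : S → A → ℝ) (hπ0 : ∀ s a, 0 ≤ π s a) (hπ1 : ∀ s, ∑ a, π s a = 1)
    (δ : S → A → ℝ) (hb : ∀ s a, |δ s a| ≤ π s a * (γ * ∑ s', ∑ a', T s s' a' * |δ s' a'|)) :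
    ∀ s a, δ s a = 0 := by
  set K : ℝ := ∑ s, ∑ a, |δ s a| with hK
  have key : K ≤ γ * K := by
    calc K ≤ ∑ s, ∑ a, π s a * (γ * ∑ s', ∑ a', T s s' a' * |δ s' a'|) := by
            apply Finset.sum_le_sum; intro s _; apply Finset.sum_le_sum; intro a _; exact hb s a
      _ = ∑ s : S, γ * ∑ s', ∑ a', T s s' a' * |δ s' a'| := by
            apply Finset.sum_congr rfl; intro s _
            rw [← Finset.sum_mul, hπ1, one_mul]
      _ = γ * ∑ s : S, ∑ s', ∑ a', T s s' a' * |δ s' a'| := by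
            rw [Finset.mul_sum]
      _ = γ * K := by
            congr 1
            rw [Finset.sum_comm]
            apply Finset.sum_congr rfl; intro s' _
            rw [Finset.sum_comm]
            apply Finset.sum_congr rfl; intro a' _
            rw [← Finset.sum_mul, hT1, one_mul]
  have hK0 : 0 ≤ K := by
    apply Finset.sum_nonneg; intro s _; apply Finset.sum_nonneg; intro a _; exact abs_nonneg _
  have hKz : K = 0 := by nlinarith
  intro s a
  have h1 : ∑ a, |δ s a| = 0 := by
    have := (Finset.sum_eq_zero_iff_of_nonneg (fun s _ => Finset.sum_nonneg
      (fun a _ => abs_nonneg (δ s a)))).mp hKz s (Finset.mem_univ s)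
    exact this
  have h2 : |δ s a| = 0 :=
    (Finset.sum_eq_zero_iff_of_nonneg (fun a _ => abs_nonneg (δ s a))).mp h1 a (Finset.mem_univ a)
  exact abs_eq_zero.mp h2

/-- Existence and uniqueness of the state-action visitation measure of a policy
(the fixed-point equation `ρ(s,a) = π(a|s)·(d(s) + γ·∑ T(s|s',a')·ρ(s',a'))`),
and membership of this measure in the Bellman flow polytope. -/
theorem stmt9 {S A : Type*} [Fintype S] [Fintype A] [Nonempty S] [Nonempty A]
    (d : S → ℝ) (hd0 : ∀ s, 0 ≤ d s) (hd1 : ∑ s, d s = 1)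
    (T : S → S → A → ℝ) (hT0 : ∀ s' s a, 0 ≤ T s' s a) (hT1 : ∀ s a, ∑ s', T s' s a = 1)
    (γ : ℝ) (hγ0 : 0 ≤ γ) (hγ1 : γ < 1)
    (π : S → A → ℝ) (hπ0 : ∀ s a, 0 ≤ π s a) (hπ1 : ∀ s, ∑ a, π s a = 1) :
    (∃! ρ : S → A → ℝ,
      ∀ s a, ρ s a = π s a * (d s + γ * ∑ s', ∑ a', T s s' a' * ρ s' a')) ∧
    (∀ ρ : S → A → ℝ,
      (∀ s a, ρ s a = π s a * (d s + γ * ∑ s', ∑ a', T s s' a' * ρ s' a')) →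
      (∀ s a, 0 ≤ ρ s a) ∧
      (∀ s, ∑ a, ρ s a = d s + γ * ∑ s', ∑ a', T s s' a' * ρ s' a')) := by
  -- The linear part of the affine fixed-point map.
  set L : (S → A → ℝ) →ₗ[ℝ] (S → A → ℝ) :=
    { toFun := fun ρ s a => π s a * (γ * ∑ s', ∑ a', T s s' a' * ρ s' a')
      map_add' := by
        intro ρ σ
        funext s a
        simp only [Pi.add_apply]
        rw [← mul_add, ← mul_add]
        congr 2
        rw [← Finset.sum_add_distrib]
        apply Finset.sum_congr rfl; intro s' _
        rw [← Finset.sum_add_distrib]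
        apply Finset.sum_congr rfl; intro a' _
        ring
      map_smul' := by
        intro c ρ
        funext s a
        simp only [Pi.smul_apply, smul_eq_mul, RingHom.id_apply]
        have h : (∑ s', ∑ a', T s s' a' * (c * ρ s' a'))
            = c * ∑ s', ∑ a', T s s' a' * ρ s' a' := by
          rw [Finset.mul_sum]
          refine Finset.sum_congr rfl fun s' _ => ?_
          rw [Finset.mul_sum]
          exact Finset.sum_congr rfl fun a' _ => by ring
        rw [h]
        ring } with hL
  have hLapp : ∀ ρ s a, L ρ s a = π s a * (γ * ∑ s', ∑ a', T s s' a' * ρ s' a') := by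
    intro ρ s a; rfl
  -- uniqueness part via the core lemma
  have huniq : ∀ ρ σ : S → A → ℝ,
      (∀ s a, ρ s a = π s a * (d s + γ * ∑ s', ∑ a', T s s' a' * ρ s' a')) →
      (∀ s a, σ s a = π s a * (d s + γ * ∑ s', ∑ a', T s s' a' * σ s' a')) →
      ρ = σ := by
    intro ρ σ hρ hσ
    have hz : ∀ s a, (ρ - σ) s a = 0 := by
      apply stmt9_core T hT0 hT1 γ hγ0 hγ1 π hπ0 hπ1
      intro s a
      have hδ : (ρ - σ) s a = π s a * (γ * ∑ s', ∑ a', T s s' a' * (ρ - σ) s' a') := by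
        simp only [Pi.sub_apply]
        rw [hρ s a, hσ s a]
        have h1 : ∀ s', ∑ a', T s s' a' * (ρ s' a' - σ s' a') =
            (∑ a', T s s' a' * ρ s' a') - ∑ a', T s s' a' * σ s' a' := by
          intro s'; rw [← Finset.sum_sub_distrib]
          apply Finset.sum_congr rfl; intro a' _; ring
        simp_rw [h1, Finset.sum_sub_distrib]
        ring
      rw [hδ, abs_mul, abs_mul, abs_of_nonneg (hπ0 s a), abs_of_nonneg hγ0]
      apply mul_le_mul_of_nonneg_left _ (hπ0 s a)
      apply mul_le_mul_of_nonneg_left _ hγ0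
      calc |∑ s', ∑ a', T s s' a' * (ρ - σ) s' a'|
          ≤ ∑ s', |∑ a', T s s' a' * (ρ - σ) s' a'| := Finset.abs_sum_le_sum_abs _ _
        _ ≤ ∑ s', ∑ a', |T s s' a' * (ρ - σ) s' a'| := by
            apply Finset.sum_le_sum; intro s' _; exact Finset.abs_sum_le_sum_abs _ _
        _ = ∑ s', ∑ a', T s s' a' * |(ρ - σ) s' a'| := by
            apply Finset.sum_congr rfl; intro s' _
            apply Finset.sum_congr rfl; intro a' _
            rw [abs_mul, abs_of_nonneg (hT0 s s' a')]
    funext s a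
    have := hz s a
    simp only [Pi.sub_apply] at this
    linarith
  -- existence via injectivity ⇒ surjectivity of id - L
  set Φ : (S → A → ℝ) →ₗ[ℝ] (S → A → ℝ) := LinearMap.id - L with hΦ
  have hinj : Function.Injective Φ := by
    rw [injective_iff_map_eq_zero]
    intro δ hδ
    have heq : ∀ s a, δ s a = π s a * (γ * ∑ s', ∑ a', T s s' a' * δ s' a') := by
      intro s a
      have := congrFun (congrFun hδ s) a
      simp only [hΦ, LinearMap.sub_apply, LinearMap.id_apply, Pi.sub_apply, Pi.zero_apply] at this
      have h2 : δ s a - L δ s a = 0 := this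
      rw [hLapp] at h2
      linarith
    have hz : ∀ s a, δ s a = 0 := by
      apply stmt9_core T hT0 hT1 γ hγ0 hγ1 π hπ0 hπ1
      intro s a
      rw [heq s a, abs_mul, abs_mul, abs_of_nonneg (hπ0 s a), abs_of_nonneg hγ0]
      apply mul_le_mul_of_nonneg_left _ (hπ0 s a)
      apply mul_le_mul_of_nonneg_left _ hγ0
      calc |∑ s', ∑ a', T s s' a' * δ s' a'|
          ≤ ∑ s', |∑ a', T s s' a' * δ s' a'| := Finset.abs_sum_le_sum_abs _ _
        _ ≤ ∑ s', ∑ a', |T s s' a' * δ s' a'| := by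
            apply Finset.sum_le_sum; intro s' _; exact Finset.abs_sum_le_sum_abs _ _
        _ = ∑ s', ∑ a', T s s' a' * |δ s' a'| := by
            apply Finset.sum_congr rfl; intro s' _
            apply Finset.sum_congr rfl; intro a' _
            rw [abs_mul, abs_of_nonneg (hT0 s s' a')]
    funext s a
    exact hz s a
  have hsurj : Function.Surjective Φ :=
    LinearMap.injective_iff_surjective.mp hinj
  obtain ⟨ρ₀, hρ₀⟩ := hsurj (fun s a => π s a * d s)
  have hfix : ∀ s a, ρ₀ s a = π s a * (d s + γ * ∑ s', ∑ a', T s s' a' * ρ₀ s' a') := by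
    intro s a
    have := congrFun (congrFun hρ₀ s) a
    simp only [hΦ, LinearMap.sub_apply, LinearMap.id_apply, Pi.sub_apply] at this
    rw [hLapp] at this
    -- this : ρ₀ s a - π s a * (γ * ∑ ...) = π s a * d s
    have : ρ₀ s a = π s a * d s + π s a * (γ * ∑ s', ∑ a', T s s' a' * ρ₀ s' a') := by
      linarith
    rw [this, mul_add]
  constructor
  · exact ⟨ρ₀, hfix, fun σ hσ => huniq σ ρ₀ hσ hfix⟩
  · intro ρ hρ
    -- nonnegativity: the negative part vanishes
    have hneg : ∀ s a, max (-(ρ s a)) 0 = 0 := by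
      apply stmt9_core T hT0 hT1 γ hγ0 hγ1 π hπ0 hπ1
      intro s a
      have hn0 : (0:ℝ) ≤ max (-(ρ s a)) 0 := le_max_right _ _
      rw [abs_of_nonneg hn0]
      have hR : (0:ℝ) ≤ π s a * (γ * ∑ s', ∑ a', T s s' a' * |max (-(ρ s' a')) 0|) := by
        apply mul_nonneg (hπ0 s a)
        apply mul_nonneg hγ0
        apply Finset.sum_nonneg; intro s' _
        apply Finset.sum_nonneg; intro a' _
        exact mul_nonneg (hT0 s s' a') (abs_nonneg _)
      rcases le_or_gt (-(ρ s a)) 0 with h | h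
      · rw [max_eq_right h]; exact hR
      · rw [max_eq_left h.le]
        -- -(ρ s a) ≤ π γ ∑ T * n where n = max(-ρ,0) ≥ -ρ
        have step : -(ρ s a) ≤ π s a * (γ * ∑ s', ∑ a', T s s' a' * max (-(ρ s' a')) 0) := by
          rw [hρ s a]
          have h1 : π s a * (d s + γ * ∑ s', ∑ a', T s s' a' * ρ s' a')
              ≥ π s a * (γ * ∑ s', ∑ a', T s s' a' * ρ s' a') := by
            apply mul_le_mul_of_nonneg_left _ (hπ0 s a)
            linarith [hd0 s]
          have h2 : ∑ s', ∑ a', T s s' a' * ρ s' a'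
              ≥ -(∑ s', ∑ a', T s s' a' * max (-(ρ s' a')) 0) := by
            rw [← Finset.sum_neg_distrib]
            apply Finset.sum_le_sum; intro s' _
            rw [← Finset.sum_neg_distrib]
            apply Finset.sum_le_sum; intro a' _
            have : -(T s s' a' * max (-(ρ s' a')) 0) = T s s' a' * (-(max (-(ρ s' a')) 0)) := by
              ring
            rw [this]
            apply mul_le_mul_of_nonneg_left _ (hT0 s s' a')
            have := le_max_left (-(ρ s' a')) 0
            linarith
          have h3 : π s a * (γ * ∑ s', ∑ a', T s s' a' * ρ s' a')
              ≥ π s a * (γ * (-(∑ s', ∑ a', T s s' a' * max (-(ρ s' a')) 0))) := by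
            apply mul_le_mul_of_nonneg_left _ (hπ0 s a)
            exact mul_le_mul_of_nonneg_left h2 hγ0
          nlinarith [hπ0 s a, hγ0]
        calc -(ρ s a) ≤ π s a * (γ * ∑ s', ∑ a', T s s' a' * max (-(ρ s' a')) 0) := step
          _ = π s a * (γ * ∑ s', ∑ a', T s s' a' * |max (-(ρ s' a')) 0|) := by
              congr 2
              apply Finset.sum_congr rfl; intro s' _
              apply Finset.sum_congr rfl; intro a' _
              rw [abs_of_nonneg (le_max_right _ _)]
    have hpos : ∀ s a, 0 ≤ ρ s a := by
      intro s a
      have := hneg s a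
      by_contra hcon
      push_neg at hcon
      rw [max_eq_left (by linarith)] at this
      linarith
    refine ⟨hpos, ?_⟩
    intro s
    have : ∑ a, ρ s a = ∑ a, π s a * (d s + γ * ∑ s', ∑ a', T s s' a' * ρ s' a') := by
      apply Finset.sum_congr rfl; intro a _; exact hρ s a
    rw [this, ← Finset.sum_mul, hπ1, one_mul]
end

section
/- Let S and A be finite nonempty sets, let d : S → ℝ be an initial distribution (d(s) ≥ 0, ∑_s d(s) = 1), let T be a transition kernel (T(s'|s,a) ≥ 0, ∑_{s'} T(s'|s,a) = 1), and let γ ∈ [0,1). Suppose ρ ∈ M satisfies ∑_{a} ρ(s,a) > 0 for every s, and define the policy π_ρ(a|s) = ρ(s,a)/∑_{a'} ρ(s,a'). If ρ' : S × A → ℝ satisfies ρ'(s,a) = π_ρ(a|s)·( d(s) + γ·∑_{s',a'} T(s|s',a')·ρ'(s',a') ) for all (s,a), then ρ' = ρ. In other words, any ρ in the Bellman flow polytope is exactly the state-action visitation measure of the policy π_ρ it induces, and π_ρ is the unique policy with visitation measure ρ. (Theorem 1 of the paper, due to Syed et al.) -/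
open Finset

/-- Theorem 1 (Syed et al.): if `ρ` lies in the Bellman flow polytope with
positive row sums and `π_ρ(a|s) = ρ(s,a)/∑_{a'} ρ(s,a')`, then `ρ` is exactly
the state-action visitation measure of `π_ρ` (any solution `ρ'` of the
fixed-point equation for `π_ρ` equals `ρ`), and `π_ρ` is the unique policy
whose visitation measure is `ρ`. -/
theorem stmt10 {S A : Type*} [Fintype S] [Fintype A] [Nonempty S] [Nonempty A]
    (d : S → ℝ) (hd0 : ∀ s, 0 ≤ d s) (hd1 : ∑ s, d s = 1)
    (T : S → S → A → ℝ) (hT0 : ∀ s' s a, 0 ≤ T s' s a) (hT1 : ∀ s a, ∑ s', T s' s a = 1)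
    (γ : ℝ) (hγ0 : 0 ≤ γ) (hγ1 : γ < 1)
    (ρ : S → A → ℝ) (hρ0 : ∀ s a, 0 ≤ ρ s a)
    (hρflow : ∀ s, ∑ a, ρ s a = d s + γ * ∑ s', ∑ a', T s s' a' * ρ s' a')
    (hpos : ∀ s, 0 < ∑ a, ρ s a) :
    (∀ ρ' : S → A → ℝ,
      (∀ s a, ρ' s a = (ρ s a / ∑ a', ρ s a') *
        (d s + γ * ∑ s', ∑ a', T s s' a' * ρ' s' a')) →
      ρ' = ρ) ∧
    (∀ π : S → A → ℝ, (∀ s a, 0 ≤ π s a) → (∀ s, ∑ a, π s a = 1) →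
      (∀ s a, ρ s a = π s a * (d s + γ * ∑ s', ∑ a', T s s' a' * ρ s' a')) →
      ∀ s a, π s a = ρ s a / ∑ a', ρ s a') := by
  have hNne : ∀ s, (∑ a', ρ s a') ≠ 0 := fun s => (hpos s).ne'
  constructor
  · intro ρ' hρ'
    have hsub : ∀ s, ∑ s', ∑ a', T s s' a' * (ρ' s' a' - ρ s' a')
        = (∑ s', ∑ a', T s s' a' * ρ' s' a') - ∑ s', ∑ a', T s s' a' * ρ s' a' := by
      intro s
      simp [mul_sub, Finset.sum_sub_distrib]
    have key : ∀ s a, ρ' s a - ρ s a =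
        (ρ s a / ∑ a', ρ s a') *
          (γ * ∑ s', ∑ a', T s s' a' * (ρ' s' a' - ρ s' a')) := by
      intro s a
      have eqN := hρflow s
      have e1 := hρ' s a
      have e1' : ρ' s a * (∑ a', ρ s a') =
          ρ s a * (d s + γ * ∑ s', ∑ a', T s s' a' * ρ' s' a') := by
        rw [e1, div_mul_eq_mul_div, div_mul_cancel₀ _ (hNne s)]
      rw [hsub s, div_mul_eq_mul_div, eq_div_iff (hNne s)]
      linear_combination e1' - ρ s a * eqN
    -- total variation contraction
    have step : ∀ s, ∑ a, |ρ' s a - ρ s a|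
        ≤ γ * ∑ s', ∑ a', T s s' a' * |ρ' s' a' - ρ s' a'| := by
      intro s
      have habs : ∀ a, |ρ' s a - ρ s a| = (ρ s a / ∑ a', ρ s a') *
          (γ * |∑ s', ∑ a', T s s' a' * (ρ' s' a' - ρ s' a')|) := by
        intro a
        rw [key s a, abs_mul, abs_mul,
          abs_of_nonneg (div_nonneg (hρ0 s a) (hpos s).le), abs_of_nonneg hγ0]
      calc ∑ a, |ρ' s a - ρ s a|
          = (∑ a, ρ s a / ∑ a', ρ s a') *
            (γ * |∑ s', ∑ a', T s s' a' * (ρ' s' a' - ρ s' a')|) := by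
            rw [Finset.sum_mul]
            exact Finset.sum_congr rfl fun a _ => habs a
        _ = γ * |∑ s', ∑ a', T s s' a' * (ρ' s' a' - ρ s' a')| := by
            rw [← Finset.sum_div, div_self (hNne s), one_mul]
        _ ≤ γ * ∑ s', ∑ a', T s s' a' * |ρ' s' a' - ρ s' a'| := by
            apply mul_le_mul_of_nonneg_left _ hγ0
            calc |∑ s', ∑ a', T s s' a' * (ρ' s' a' - ρ s' a')|
                ≤ ∑ s', |∑ a', T s s' a' * (ρ' s' a' - ρ s' a')| :=
                  Finset.abs_sum_le_sum_abs _ _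
              _ ≤ ∑ s', ∑ a', T s s' a' * |ρ' s' a' - ρ s' a'| := by
                  refine Finset.sum_le_sum fun s' _ => ?_
                  refine (Finset.abs_sum_le_sum_abs _ _).trans ?_
                  refine Finset.sum_le_sum fun a' _ => ?_
                  rw [abs_mul, abs_of_nonneg (hT0 s s' a')]
    have hC : (∑ s, ∑ a, |ρ' s a - ρ s a|) ≤ γ * ∑ s, ∑ a, |ρ' s a - ρ s a| := by
      calc ∑ s, ∑ a, |ρ' s a - ρ s a|
          ≤ ∑ s, γ * ∑ s', ∑ a', T s s' a' * |ρ' s' a' - ρ s' a'| :=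
            Finset.sum_le_sum fun s _ => step s
        _ = γ * ∑ s', ∑ a', (∑ s, T s s' a') * |ρ' s' a' - ρ s' a'| := by
            rw [← Finset.mul_sum, Finset.sum_comm]
            congr 1
            refine Finset.sum_congr rfl fun s' _ => ?_
            rw [Finset.sum_comm]
            refine Finset.sum_congr rfl fun a' _ => ?_
            rw [Finset.sum_mul]
        _ = γ * ∑ s, ∑ a, |ρ' s a - ρ s a| := by
            simp [hT1]
    have hC0 : 0 ≤ ∑ s, ∑ a, |ρ' s a - ρ s a| :=
      Finset.sum_nonneg fun s _ => Finset.sum_nonneg fun a _ => abs_nonneg _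
    have hCzero : ∑ s, ∑ a, |ρ' s a - ρ s a| = 0 := by nlinarith
    funext s a
    have h1 := (Finset.sum_eq_zero_iff_of_nonneg
      (fun s _ => Finset.sum_nonneg fun a _ => abs_nonneg _)).mp hCzero s (Finset.mem_univ s)
    have h2 := (Finset.sum_eq_zero_iff_of_nonneg
      (fun a _ => abs_nonneg _)).mp h1 a (Finset.mem_univ a)
    have := abs_eq_zero.mp h2
    linarith
  · intro π hπ0 hπ1 hfix s a
    have h := hfix s a
    rw [← hρflow s] at h
    rw [h, mul_div_assoc, div_self (hNne s), mul_one]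
end

section
/- Let A be a finite nonempty set with |A| = n ≥ 1. Then min over q ∈ Δ_A of max over p ∈ Δ_A of ∑_{a} p(a)·(1/2)·∑_{a'}(𝟙{a' = a} − q(a'))² equals max over p ∈ Δ_A of min over q ∈ Δ_A of the same expression, and both equal (1/2)·(1 − 1/n); moreover the outer minimum on the left is attained at the uniform distribution q(a) = 1/n for all a, and the outer maximum on the right is attained at the uniform distribution p(a) = 1/n. (This is the unconstrained single-state instance of Theorem 5: the maximum Tsallis entropy distribution minimizes the worst-case Brier score.) -/
/-!
The uniform distribution `u` is a saddle point of the expected Brier score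
`B p q = ∑ₐ p a · ½ ∑ₐ' (𝟙{a' = a} - q a')²`. For `p` in the simplex,
`B p q = ½ (1 + ‖q‖²) - ⟪p, q⟫`, so `B p u = ½ (1 - 1/n)` does not depend on `p`,
while `B u q = ½ (1 + ‖q‖²) - 1/n ≥ ½ (1 - 1/n)` because `‖q‖² ≥ 1/n` by Cauchy–Schwarz.
A saddle point forces the minimax and the maximin values to agree with its value.
-/

open Finset

section Saddle

variable {α β : Type*} {X : Set α} {Y : Set β}

lemma csSup_eq_of_forall_le_of_mem {g : α → ℝ} {x₀ : α} (hx₀ : x₀ ∈ X)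
    (h : ∀ x ∈ X, g x ≤ g x₀) : sSup {z | ∃ x ∈ X, z = g x} = g x₀ :=
  IsGreatest.csSup_eq ⟨⟨x₀, hx₀, rfl⟩, by rintro _ ⟨x, hx, rfl⟩; exact h x hx⟩

lemma csInf_eq_of_le_of_forall_mem {g : β → ℝ} {y₀ : β} (hy₀ : y₀ ∈ Y)
    (h : ∀ y ∈ Y, g y₀ ≤ g y) : sInf {z | ∃ y ∈ Y, z = g y} = g y₀ :=
  IsLeast.csInf_eq ⟨⟨y₀, hy₀, rfl⟩, by rintro _ ⟨y, hy, rfl⟩; exact h y hy⟩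

variable {f : α → β → ℝ} {x₀ : α} {y₀ : β}

lemma csInf_csSup_eq_of_isSaddle (hx₀ : x₀ ∈ X) (hy₀ : y₀ ∈ Y)
    (hmax : ∀ x ∈ X, f x y₀ ≤ f x₀ y₀) (hmin : ∀ y ∈ Y, f x₀ y₀ ≤ f x₀ y)
    (hbdd : ∀ y ∈ Y, BddAbove {z | ∃ x ∈ X, z = f x y}) :
    sInf {w | ∃ y ∈ Y, w = sSup {z | ∃ x ∈ X, z = f x y}} = f x₀ y₀ := by
  refine IsLeast.csInf_eq ⟨⟨y₀, hy₀, (csSup_eq_of_forall_le_of_mem hx₀ hmax).symm⟩, ?_⟩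
  rintro _ ⟨y, hy, rfl⟩
  exact (hmin y hy).trans (le_csSup (hbdd y hy) ⟨x₀, hx₀, rfl⟩)

lemma csSup_csInf_eq_of_isSaddle (hx₀ : x₀ ∈ X) (hy₀ : y₀ ∈ Y)
    (hmax : ∀ x ∈ X, f x y₀ ≤ f x₀ y₀) (hmin : ∀ y ∈ Y, f x₀ y₀ ≤ f x₀ y)
    (hbdd : ∀ x ∈ X, BddBelow {z | ∃ y ∈ Y, z = f x y}) :
    sSup {w | ∃ x ∈ X, w = sInf {z | ∃ y ∈ Y, z = f x y}} = f x₀ y₀ := by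
  refine IsGreatest.csSup_eq ⟨⟨x₀, hx₀, (csInf_eq_of_le_of_forall_mem hy₀ hmin).symm⟩, ?_⟩
  rintro _ ⟨x, hx, rfl⟩
  exact (csInf_le (hbdd x hx) ⟨y₀, hy₀, rfl⟩).trans (hmax x hx)

end Saddle

section Brier

variable {A : Type*} [Fintype A]

lemma inv_card_le_sum_sq [Nonempty A] {q : A → ℝ} (hq : ∑ a, q a = 1) :
    (Fintype.card A : ℝ)⁻¹ ≤ ∑ a, q a ^ 2 := by
  have hcs := sq_sum_le_card_mul_sum_sq (s := univ) (f := q)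
  rw [hq, card_univ, one_pow] at hcs
  rwa [inv_le_iff_one_le_mul₀ (by exact_mod_cast Fintype.card_pos), mul_comm]

lemma uniform_mem_stdSimplex [Nonempty A] :
    (fun _ => 1 / (Fintype.card A : ℝ)) ∈ stdSimplex ℝ A := by
  have hn : (Fintype.card A : ℝ) ≠ 0 := by exact_mod_cast Fintype.card_ne_zero
  refine ⟨fun _ => by positivity, ?_⟩
  simp [card_univ, hn]

variable [DecidableEq A]

noncomputable def brierScore (q : A → ℝ) (a : A) : ℝ :=
  (1 / 2) * ∑ a', ((if a' = a then (1 : ℝ) else 0) - q a') ^ 2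

noncomputable def expectedBrier (p q : A → ℝ) : ℝ :=
  ∑ a, p a * brierScore q a

lemma brierScore_eq (q : A → ℝ) (a : A) :
    brierScore q a = (1 / 2) * (1 + ∑ a', q a' ^ 2) - q a := by
  have hsplit : ∀ a', ((if a' = a then (1 : ℝ) else 0) - q a') ^ 2
      = (if a' = a then 1 - 2 * q a' else 0) + q a' ^ 2 := by
    intro a'; split_ifs <;> ring
  simp only [brierScore, hsplit, sum_add_distrib, sum_ite_eq', mem_univ, if_true]
  ring

lemma expectedBrier_eq (p q : A → ℝ) :
    expectedBrier p q = (∑ a, p a) * ((1 / 2) * (1 + ∑ a, q a ^ 2)) - ∑ a, p a * q a := by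
  simp only [expectedBrier, brierScore_eq, mul_sub, sum_sub_distrib, sum_mul]

lemma expectedBrier_nonneg {p : A → ℝ} (hp : ∀ a, 0 ≤ p a) (q : A → ℝ) :
    0 ≤ expectedBrier p q :=
  sum_nonneg fun a _ => mul_nonneg (hp a) <|
    mul_nonneg (by norm_num) (sum_nonneg fun _ _ => sq_nonneg _)

lemma expectedBrier_le {p q : A → ℝ} (hp : p ∈ stdSimplex ℝ A) (hq : q ∈ stdSimplex ℝ A) :
    expectedBrier p q ≤ (1 / 2) * (1 + ∑ a, q a ^ 2) := by
  have hpq : 0 ≤ ∑ a, p a * q a := sum_nonneg fun a _ => mul_nonneg (hp.1 a) (hq.1 a)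
  rw [expectedBrier_eq, hp.2, one_mul]
  linarith

variable [Nonempty A]

lemma expectedBrier_uniform_right {p : A → ℝ} (hp : ∑ a, p a = 1) :
    expectedBrier p (fun _ => 1 / (Fintype.card A : ℝ))
      = (1 / 2) * (1 - 1 / (Fintype.card A : ℝ)) := by
  have hn : (Fintype.card A : ℝ) ≠ 0 := by exact_mod_cast Fintype.card_ne_zero
  rw [expectedBrier_eq, ← sum_mul, hp]
  simp only [sum_const, card_univ, nsmul_eq_mul]
  field_simp
  ring

lemma expectedBrier_uniform_left_ge {q : A → ℝ} (hq : ∑ a, q a = 1) :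
    (1 / 2) * (1 - 1 / (Fintype.card A : ℝ))
      ≤ expectedBrier (fun _ => 1 / (Fintype.card A : ℝ)) q := by
  have hsq := inv_card_le_sum_sq hq
  rw [expectedBrier_eq, ← mul_sum, hq, uniform_mem_stdSimplex.2]
  simp only [one_div] at hsq ⊢
  linarith

end Brier

/-- Unconstrained single-state instance of Theorem 5: the minimax value of the
expected Brier score over the probability simplex equals the maximin value,
both equal `(1/2)·(1 − 1/n)`, and both outer optima are attained at the uniform
distribution. -/
theorem stmt12 {A : Type*} [Fintype A] [Nonempty A] [DecidableEq A] :
    let n : ℕ := Fintype.card A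
    let Δ : Set (A → ℝ) := {r | (∀ a, 0 ≤ r a) ∧ ∑ a, r a = 1}
    let B : (A → ℝ) → (A → ℝ) → ℝ := fun p q =>
      ∑ a, p a * ((1 / 2) * ∑ a', ((if a' = a then (1 : ℝ) else 0) - q a') ^ 2)
    let u : A → ℝ := fun _ => 1 / (n : ℝ)
    let val : ℝ := (1 / 2) * (1 - 1 / (n : ℝ))
    sInf {x : ℝ | ∃ q ∈ Δ, x = sSup {y : ℝ | ∃ p ∈ Δ, y = B p q}} = val ∧
    sSup {x : ℝ | ∃ p ∈ Δ, x = sInf {y : ℝ | ∃ q ∈ Δ, y = B p q}} = val ∧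
    sSup {y : ℝ | ∃ p ∈ Δ, y = B p u} = val ∧
    sInf {y : ℝ | ∃ q ∈ Δ, y = B u q} = val := by
  intro n Δ B u val
  have hu : u ∈ stdSimplex ℝ A := uniform_mem_stdSimplex
  have hval : expectedBrier u u = val := expectedBrier_uniform_right hu.2
  have hmax : ∀ p ∈ Δ, expectedBrier p u ≤ expectedBrier u u := fun p hp => by
    rw [hval, expectedBrier_uniform_right hp.2]
  have hmin : ∀ q ∈ Δ, expectedBrier u u ≤ expectedBrier u q := fun q hq =>
    hval ▸ expectedBrier_uniform_left_ge hq.2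
  have hbddAbove : ∀ q ∈ Δ, BddAbove {y | ∃ p ∈ Δ, y = B p q} := fun q hq =>
    ⟨_, by rintro _ ⟨p, hp, rfl⟩; exact expectedBrier_le hp hq⟩
  have hbddBelow : ∀ p ∈ Δ, BddBelow {y | ∃ q ∈ Δ, y = B p q} := fun p hp =>
    ⟨0, by rintro _ ⟨q, -, rfl⟩; exact expectedBrier_nonneg hp.1 q⟩
  rw [← hval]
  exact ⟨csInf_csSup_eq_of_isSaddle hu hu hmax hmin hbddAbove,
    csSup_csInf_eq_of_isSaddle hu hu hmax hmin hbddBelow,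
    csSup_eq_of_forall_le_of_mem hu hmax, csInf_eq_of_le_of_forall_mem hu hmin⟩
end

section
/- Let S and A be finite nonempty sets, let α ≥ 0, let φ : S × A → ℝ^m, let ρ_E : S × A → ℝ, and let ψ : ℝ^m → ℝ be convex. Define L̄(ρ, θ) = −α·W̄(ρ) + ⟨θ, ∑_{s,a} ρ(s,a)·φ(s,a) − ∑_{s,a} ρ_E(s,a)·φ(s,a)⟩ − ψ(θ). Then: (i) for each fixed θ ∈ ℝ^m, the map ρ ↦ L̄(ρ, θ) is convex on the set of nonnegative ρ : S × A → ℝ; and (ii) for each fixed nonnegative ρ, the map θ ↦ L̄(ρ, θ) is concave on ℝ^m. (This convex–concave structure of the Lagrangian is the property used to apply the minimax theorem in the proof of Theorem 6.) -/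
open Finset

/-- quadratic-over-linear convexity, with `0/0 = 0` convention. -/
lemma qol (t u x1 x2 r1 r2 : ℝ) (ht : 0 ≤ t) (hu : 0 ≤ u) (htu : t + u = 1)
    (hx1 : 0 ≤ x1) (hx2 : 0 ≤ x2) (hr1 : x1 ≤ r1) (hr2 : x2 ≤ r2) :
    (t * x1 + u * x2) ^ 2 / (t * r1 + u * r2) ≤ t * (x1 ^ 2 / r1) + u * (x2 ^ 2 / r2) := by
  have h0r1 : 0 ≤ r1 := hx1.trans hr1
  have h0r2 : 0 ≤ r2 := hx2.trans hr2
  rcases eq_or_lt_of_le h0r1 with hr1z | hr1p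
  · -- r1 = 0, so x1 = 0
    have hx1z : x1 = 0 := le_antisymm (hr1z ▸ hr1) hx1
    subst hx1z
    rcases eq_or_lt_of_le hu with huz | hup
    · simp [← huz, ← hr1z]
    · have : (t * 0 + u * x2) ^ 2 / (t * r1 + u * r2) = u * (x2 ^ 2 / r2) := by
        rw [← hr1z]
        rcases eq_or_lt_of_le h0r2 with hr2z | hr2p
        · have : x2 = 0 := le_antisymm (hr2z ▸ hr2) hx2
          simp [this, ← hr2z]
        · field_simp
          ring
      rw [this]
      simp
  · rcases eq_or_lt_of_le h0r2 with hr2z | hr2p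
    · -- r2 = 0, so x2 = 0
      have hx2z : x2 = 0 := le_antisymm (hr2z ▸ hr2) hx2
      subst hx2z
      rcases eq_or_lt_of_le ht with htz | htp
      · simp [← htz, ← hr2z]
      · have : (t * x1 + u * 0) ^ 2 / (t * r1 + u * r2) = t * (x1 ^ 2 / r1) := by
          rw [← hr2z]
          field_simp
          ring
        rw [this]
        simp
    · -- both positive
      have hD : 0 < t * r1 + u * r2 := by
        rcases eq_or_lt_of_le ht with htz | htp
        · have : u = 1 := by linarith
          simp [← htz, this, hr2p]
        · positivity
      rw [div_le_iff₀ hD]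
      have h1 : x1 ^ 2 / r1 = x1 ^ 2 / r1 := rfl
      have e1 : x1 ^ 2 / r1 * r1 = x1 ^ 2 := div_mul_cancel₀ _ hr1p.ne'
      have e2 : x2 ^ 2 / r2 * r2 = x2 ^ 2 := div_mul_cancel₀ _ hr2p.ne'
      have key : (t * x1 + u * x2) ^ 2 * (r1 * r2) ≤
          (t * (x1 ^ 2 / r1) + u * (x2 ^ 2 / r2)) * (t * r1 + u * r2) * (r1 * r2) := by
        have expand : (t * (x1 ^ 2 / r1) + u * (x2 ^ 2 / r2)) * (t * r1 + u * r2) * (r1 * r2)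
            = (t * x1 ^ 2 * r2 + u * x2 ^ 2 * r1) * (t * r1 + u * r2) := by
          field_simp
        rw [expand]
        nlinarith [mul_nonneg (mul_nonneg ht hu) (sq_nonneg (x1 * r2 - x2 * r1)),
          mul_pos hr1p hr2p]
      have hrr : 0 < r1 * r2 := mul_pos hr1p hr2p
      exact le_of_mul_le_mul_right key hrr

/-- The convex–concave structure of the Lagrangian `L̄` used in the proof of
Theorem 6: `ρ ↦ L̄(ρ,θ)` is convex on the nonnegative orthant for each fixed
`θ`, and `θ ↦ L̄(ρ,θ)` is concave for each fixed nonnegative `ρ`. -/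
theorem stmt14 {S A : Type*} [Fintype S] [Fintype A] [Nonempty S] [Nonempty A]
    (m : ℕ) (α : ℝ) (hα : 0 ≤ α)
    (φ : S → A → Fin m → ℝ) (ρE : S → A → ℝ)
    (ψ : (Fin m → ℝ) → ℝ) (hψ : ConvexOn ℝ Set.univ ψ) :
    let L : (S → A → ℝ) → (Fin m → ℝ) → ℝ := fun ρ θ =>
      -α * Wbar ρ
        + (∑ i, θ i * ((∑ s, ∑ a, ρ s a * φ s a i) - ∑ s, ∑ a, ρE s a * φ s a i))
        - ψ θ
    (∀ θ : Fin m → ℝ,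
      ConvexOn ℝ {ρ : S → A → ℝ | ∀ s a, 0 ≤ ρ s a} (fun ρ => L ρ θ)) ∧
    (∀ ρ : S → A → ℝ, (∀ s a, 0 ≤ ρ s a) →
      ConcaveOn ℝ Set.univ (fun θ => L ρ θ)) := by
  intro L
  -- rewrite of Wbar
  have hW : ∀ ρ : S → A → ℝ, Wbar ρ =
      1 / 2 * (∑ s, ∑ a, ρ s a) - 1 / 2 * ∑ s, ∑ a, (ρ s a) ^ 2 / ∑ a', ρ s a' := by
    intro ρ
    unfold Wbar
    rw [← mul_sub, ← Finset.sum_sub_distrib]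
    congr 1
    refine Finset.sum_congr rfl fun s _ => ?_
    rw [← Finset.sum_sub_distrib]
    refine Finset.sum_congr rfl fun a _ => ?_
    ring
  -- concavity of Wbar on the orthant
  have key : ∀ (x y : S → A → ℝ), (∀ s a, 0 ≤ x s a) → (∀ s a, 0 ≤ y s a) →
      ∀ t u : ℝ, 0 ≤ t → 0 ≤ u → t + u = 1 →
      t * Wbar x + u * Wbar y ≤ Wbar (t • x + u • y) := by
    intro x y hx hy t u ht hu htu
    have hz : ∀ s a, (t • x + u • y) s a = t * x s a + u * y s a := by
      intro s a; simp [Pi.smul_apply, smul_eq_mul]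
    have hsum : ∑ s, ∑ a, (t • x + u • y) s a = t * (∑ s, ∑ a, x s a) + u * (∑ s, ∑ a, y s a) := by
      simp only [hz, Finset.mul_sum, ← Finset.sum_add_distrib]
    have hqol : ∑ s, ∑ a, ((t • x + u • y) s a) ^ 2 / (∑ a', (t • x + u • y) s a')
        ≤ t * (∑ s, ∑ a, (x s a) ^ 2 / ∑ a', x s a') +
          u * (∑ s, ∑ a, (y s a) ^ 2 / ∑ a', y s a') := by
      rw [Finset.mul_sum, Finset.mul_sum, ← Finset.sum_add_distrib]
      refine Finset.sum_le_sum fun s _ => ?_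
      rw [Finset.mul_sum, Finset.mul_sum, ← Finset.sum_add_distrib]
      refine Finset.sum_le_sum fun a _ => ?_
      have hden : ∑ a', (t • x + u • y) s a' = t * (∑ a', x s a') + u * (∑ a', y s a') := by
        simp only [hz, Finset.mul_sum, ← Finset.sum_add_distrib]
      rw [hz, hden]
      exact qol t u (x s a) (y s a) (∑ a', x s a') (∑ a', y s a') ht hu htu
        (hx s a) (hy s a)
        (Finset.single_le_sum (fun a' _ => hx s a') (Finset.mem_univ a))
        (Finset.single_le_sum (fun a' _ => hy s a') (Finset.mem_univ a))
    rw [hW, hW, hW, hsum]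
    linarith
  constructor
  · intro θ
    constructor
    · intro x hx y hy t u ht hu htu
      intro s a
      have := hx s a; have := hy s a
      simp only [Pi.add_apply, Pi.smul_apply, smul_eq_mul]
      positivity
    · intro x hx y hy t u ht hu htu
      have hkey := key x y hx hy t u ht hu htu
      have hWle : α * (t * Wbar x + u * Wbar y) ≤ α * Wbar (t • x + u • y) :=
        mul_le_mul_of_nonneg_left hkey hα
      have hz : ∀ s a, (t • x + u • y) s a = t * x s a + u * y s a := by
        intro s a; simp [Pi.smul_apply, smul_eq_mul]
      have hlin : ∀ i, ∑ s, ∑ a, (t • x + u • y) s a * φ s a i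
          = t * (∑ s, ∑ a, x s a * φ s a i) + u * (∑ s, ∑ a, y s a * φ s a i) := by
        intro i
        simp only [hz, Finset.mul_sum, ← Finset.sum_add_distrib]
        refine Finset.sum_congr rfl fun s _ => Finset.sum_congr rfl fun a _ => by ring
      have hlinθ : ∑ i, θ i * ((∑ s, ∑ a, (t • x + u • y) s a * φ s a i)
            - ∑ s, ∑ a, ρE s a * φ s a i)
          = t * ∑ i, θ i * ((∑ s, ∑ a, x s a * φ s a i) - ∑ s, ∑ a, ρE s a * φ s a i)
            + u * ∑ i, θ i * ((∑ s, ∑ a, y s a * φ s a i) - ∑ s, ∑ a, ρE s a * φ s a i) := by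
        rw [Finset.mul_sum, Finset.mul_sum, ← Finset.sum_add_distrib]
        refine Finset.sum_congr rfl fun i _ => ?_
        rw [hlin i]
        linear_combination (θ i * ∑ s, ∑ a, ρE s a * φ s a i) * htu
      show -α * Wbar (t • x + u • y) + _ - ψ θ ≤ _
      simp only [L, smul_eq_mul]
      rw [hlinθ]
      have hψeq : t * (-α * Wbar x
            + ∑ i, θ i * ((∑ s, ∑ a, x s a * φ s a i) - ∑ s, ∑ a, ρE s a * φ s a i) - ψ θ)
          + u * (-α * Wbar y
            + ∑ i, θ i * ((∑ s, ∑ a, y s a * φ s a i) - ∑ s, ∑ a, ρE s a * φ s a i) - ψ θ)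
          = -(α * (t * Wbar x + u * Wbar y))
            + (t * ∑ i, θ i * ((∑ s, ∑ a, x s a * φ s a i) - ∑ s, ∑ a, ρE s a * φ s a i)
              + u * ∑ i, θ i * ((∑ s, ∑ a, y s a * φ s a i) - ∑ s, ∑ a, ρE s a * φ s a i))
            - ψ θ := by
        linear_combination (-ψ θ) * htu
      rw [hψeq]
      linarith [hWle]
  · intro ρ hρ
    have haff : ConcaveOn ℝ (Set.univ : Set (Fin m → ℝ)) (fun θ : Fin m → ℝ =>
        -α * Wbar ρ + ∑ i, θ i * ((∑ s, ∑ a, ρ s a * φ s a i) - ∑ s, ∑ a, ρE s a * φ s a i)) := by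
      refine ⟨convex_univ, fun x _ y _ t u ht hu htu => le_of_eq ?_⟩
      have hz : ∀ i, (t • x + u • y) i = t * x i + u * y i := by
        intro i; simp [Pi.smul_apply, smul_eq_mul]
      simp only [hz]
      have hsum : ∑ i, (t * x i + u * y i) * ((∑ s, ∑ a, ρ s a * φ s a i) - ∑ s, ∑ a, ρE s a * φ s a i)
          = t * ∑ i, x i * ((∑ s, ∑ a, ρ s a * φ s a i) - ∑ s, ∑ a, ρE s a * φ s a i)
            + u * ∑ i, y i * ((∑ s, ∑ a, ρ s a * φ s a i) - ∑ s, ∑ a, ρE s a * φ s a i) := by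
        rw [Finset.mul_sum, Finset.mul_sum, ← Finset.sum_add_distrib]
        exact Finset.sum_congr rfl fun i _ => by ring
      simp only [smul_eq_mul]
      rw [hsum]
      linear_combination (-α * Wbar ρ) * htu
    exact haff.sub hψ
end
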